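/- arXiv:1802.10155 — 7 statements merged into one kernel-verified Lean document; each statement's English description precedes it below -/
import Mathlib

section
/- Let β, γ : ℝ³ → ℝ be smooth functions satisfying β(0,0,z) = γ(0,0,z) = ∂γ/∂x(0,0,z) = ∂γ/∂y(0,0,z) = 0 for all z ∈ ℝ. Define vector fields X₁ = ∂ₓ − (y/2)∂_z + βy(y∂ₓ − x∂_y) − γ(y/2)∂_z and X₂ = ∂_y + (x/2)∂_z − βx(y∂ₓ − x∂_y) + γ(x/2)∂_z, i.e. X₁(x,y,z) = (1 + β(x,y,z)y², −β(x,y,z)xy, −y/2 − γ(x,y,z)y/2) and X₂(x,y,z) = (−β(x,y,z)xy, 1 + β(x,y,z)x², x/2 + γ(x,y,z)x/2). Let X₃ = [X₂, X₁] (Lie bracket of vector fields) and let A(p) be the 3×3 real matrix whose columns are X₁(p), X₂(p), X₃(p). Then the function p ↦ |det A(p)|⁻¹ − (1 − 2q(x,y)) is O(‖p‖³) as p = (x,y,z) → 0, where q(x,y) = (1/2)∂²γ/∂x²(0)·x² + ∂²γ/∂x∂y(0)·xy + (1/2)∂²γ/∂y²(0)·y² is the second-order homogeneous Taylor part of γ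 at the origin restricted to z = 0. -/
open Real Asymptotics Filter

section Helpers

variable {F : Type*} [NormedAddCommGroup F] [NormedSpace ℝ F]

private abbrev E3 := ℝ × ℝ × ℝ

private lemma bigO_step {f : E3 → F} {n : ℕ}
    (hf : Differentiable ℝ f) (h0 : f 0 = 0)
    (hO : (fun p => fderiv ℝ f p) =O[nhds 0] fun p : E3 => ‖p‖ ^ n) :
    f =O[nhds 0] fun p : E3 => ‖p‖ ^ (n + 1) := by
  obtain ⟨C, hC⟩ := hO.bound
  rw [Metric.eventually_nhds_iff] at hC
  obtain ⟨δ, hδ, hb⟩ := hC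
  rw [isBigO_iff]
  refine ⟨|C|, ?_⟩
  rw [Metric.eventually_nhds_iff]
  refine ⟨δ, hδ, fun {p} hp => ?_⟩
  have hp' : ‖p‖ < δ := by simpa [dist_eq_norm] using hp
  have key : ‖f p - f 0‖ ≤ (|C| * ‖p‖ ^ n) * ‖p - 0‖ := by
    refine Convex.norm_image_sub_le_of_norm_fderiv_le
      (fun q hq => hf q) (fun q hq => ?_) (convex_closedBall (0:E3) ‖p‖)
      (Metric.mem_closedBall_self (norm_nonneg p)) ?_
    · have hqp : ‖q‖ ≤ ‖p‖ := by simpa [dist_eq_norm] using hq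
      have h1 : ‖fderiv ℝ f q‖ ≤ C * ‖‖q‖ ^ n‖ := by
        apply hb; simpa [dist_eq_norm] using lt_of_le_of_lt hqp hp'
      refine h1.trans ?_
      have h2 : ‖q‖ ^ n ≤ ‖p‖ ^ n := pow_le_pow_left₀ (norm_nonneg q) hqp n
      have h3 : (0:ℝ) ≤ ‖q‖ ^ n := pow_nonneg (norm_nonneg q) n
      calc C * ‖‖q‖ ^ n‖ ≤ |C| * ‖q‖ ^ n := by
            rw [Real.norm_eq_abs, abs_of_nonneg h3]
            exact mul_le_mul_of_nonneg_right (le_abs_self C) h3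
        _ ≤ |C| * ‖p‖ ^ n := mul_le_mul_of_nonneg_left h2 (abs_nonneg C)
    · simpa [dist_eq_norm] using le_refl ‖p‖
  rw [h0, sub_zero, sub_zero] at key
  calc ‖f p‖ ≤ |C| * ‖p‖ ^ n * ‖p‖ := key
    _ = |C| * ‖p‖ ^ (n+1) := by ring
    _ ≤ |C| * ‖‖p‖ ^ (n+1)‖ := by
        rw [Real.norm_eq_abs, abs_of_nonneg (pow_nonneg (norm_nonneg p) _)]

private lemma bigO1 {f : E3 → F} (hf : ContDiff ℝ (⊤ : ℕ∞) f) (h0 : f 0 = 0) :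
    f =O[nhds 0] fun p : E3 => ‖p‖ ^ 1 := by
  refine bigO_step (hf.differentiable (by simp)) h0 ?_
  have hcont : Continuous (fun p => fderiv ℝ f p) := hf.continuous_fderiv (by simp)
  have h := (hcont.tendsto 0).isBigO_one (F := ℝ)
  have hg : (fun p : E3 => ‖p‖ ^ 0) = (1 : E3 → ℝ) := by funext p; simp
  rw [hg]
  exact h

private lemma bigO2 {f : E3 → F} (hf : ContDiff ℝ (⊤ : ℕ∞) f) (h0 : f 0 = 0)
    (h1 : fderiv ℝ f 0 = 0) : f =O[nhds 0] fun p : E3 => ‖p‖ ^ 2 := by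
  refine bigO_step (hf.differentiable (by simp)) h0 ?_
  exact bigO1 (hf.fderiv_right (by simp)) h1

private lemma bigO3 {f : E3 → F} (hf : ContDiff ℝ (⊤ : ℕ∞) f) (h0 : f 0 = 0)
    (h1 : fderiv ℝ f 0 = 0) (h2 : fderiv ℝ (fderiv ℝ f) 0 = 0) :
    f =O[nhds 0] fun p : E3 => ‖p‖ ^ 3 := by
  refine bigO_step (hf.differentiable (by simp)) h0 ?_
  exact bigO2 (hf.fderiv_right (by simp)) h1 h2

private lemma decomp3 (v : E3) :
    v = v.1 • ((1:ℝ),(0:ℝ),(0:ℝ)) + v.2.1 • ((0:ℝ),(1:ℝ),(0:ℝ)) + v.2.2 • ((0:ℝ),(0:ℝ),(1:ℝ)) := by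
  ext <;> simp

private lemma axis_deriv (G : E3 → F) (hG : Differentiable ℝ G)
    (h : ∀ z : ℝ, G (0, 0, z) = 0) (z₀ : ℝ) :
    fderiv ℝ G (0, 0, z₀) ((0:ℝ),(0:ℝ),(1:ℝ)) = 0 := by
  have hc : HasDerivAt (fun z : ℝ => ((0:ℝ),(0:ℝ),z)) ((0:ℝ),(0:ℝ),(1:ℝ)) z₀ :=
    (hasDerivAt_const z₀ (0:ℝ)).prodMk ((hasDerivAt_const z₀ (0:ℝ)).prodMk (hasDerivAt_id z₀))
  have H := (hG (0,0,z₀)).hasFDerivAt.comp_hasDerivAt z₀ hc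
  have hzero : (fun z : ℝ => G (0,0,z)) = fun _ => (0:F) := funext h
  rw [show (G ∘ fun z : ℝ => ((0:ℝ),(0:ℝ),z)) = fun z : ℝ => G (0,0,z) from rfl, hzero] at H
  exact H.unique (hasDerivAt_const z₀ 0)

private lemma second_apply (f : E3 → F) (hf : ContDiff ℝ (⊤ : ℕ∞) f) (u v : E3) :
    fderiv ℝ (fderiv ℝ f) 0 u v = fderiv ℝ (fun p => fderiv ℝ f p v) 0 u := by
  have hd : DifferentiableAt ℝ (fderiv ℝ f) 0 :=
    ((hf.fderiv_right (m := (⊤ : ℕ∞)) (by simp)).differentiable (by simp)) 0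
  rw [fderiv_clm_apply hd (differentiableAt_const v)]
  simp

private lemma symm_second (f : E3 → F) (hf : ContDiff ℝ (⊤ : ℕ∞) f) (u v : E3) :
    fderiv ℝ (fun p => fderiv ℝ f p v) 0 u = fderiv ℝ (fun p => fderiv ℝ f p u) 0 v := by
  rw [← second_apply f hf, ← second_apply f hf]
  exact second_derivative_symmetric
    (fun y => ((hf.differentiable (by simp)) y).hasFDerivAt)
    (((hf.fderiv_right (m := (⊤ : ℕ∞)) (by simp)).differentiable (by simp)) 0).hasFDerivAt u v

private lemma mulpow {f g : E3 → ℝ} {m n : ℕ} (hf : f =O[nhds 0] fun p : E3 => ‖p‖ ^ m)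
    (hg : g =O[nhds 0] fun p : E3 => ‖p‖ ^ n) :
    (fun p => f p * g p) =O[nhds 0] fun p : E3 => ‖p‖ ^ (m + n) := by
  simpa [pow_add] using hf.mul hg

private lemma powO {m n : ℕ} (h : n ≤ m) :
    (fun p : E3 => ‖p‖ ^ m) =O[nhds 0] fun p : E3 => ‖p‖ ^ n := by
  rw [Asymptotics.isBigO_iff]
  refine ⟨1, ?_⟩
  rw [Metric.eventually_nhds_iff]
  refine ⟨1, one_pos, fun {p} hp => ?_⟩
  have hp1 : ‖p‖ ≤ 1 := by simpa [dist_eq_norm] using hp.le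
  have h1 : ‖p‖ ^ m ≤ ‖p‖ ^ n := pow_le_pow_of_le_one (norm_nonneg p) hp1 h
  have h2 : (0:ℝ) ≤ ‖p‖ ^ n := pow_nonneg (norm_nonneg p) n
  rw [Real.norm_eq_abs, Real.norm_eq_abs, abs_of_nonneg (pow_nonneg (norm_nonneg p) m),
    abs_of_nonneg h2, one_mul]
  exact h1

private lemma oneO {f : E3 → ℝ} {L : ℝ} (h : Filter.Tendsto f (nhds 0) (nhds L)) :
    f =O[nhds 0] fun p : E3 => ‖p‖ ^ 0 := by
  have h1 := h.isBigO_one (F := ℝ)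
  have hg : (fun p : E3 => ‖p‖ ^ 0) = (1 : E3 → ℝ) := by funext p; simp
  rw [hg]; exact h1

private lemma fstO : (fun p : E3 => p.1) =O[nhds 0] fun p : E3 => ‖p‖ ^ 1 := by
  refine Asymptotics.isBigO_of_le _ fun p => ?_
  rw [pow_one, Real.norm_eq_abs (‖p‖), abs_of_nonneg (norm_nonneg p)]
  exact norm_fst_le p

private lemma sndO : (fun p : E3 => p.2.1) =O[nhds 0] fun p : E3 => ‖p‖ ^ 1 := by
  refine Asymptotics.isBigO_of_le _ fun p => ?_
  rw [pow_one, Real.norm_eq_abs (‖p‖), abs_of_nonneg (norm_nonneg p)]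
  exact (norm_fst_le p.2).trans (norm_snd_le p)

private lemma keyX1 (β γ : E3 → ℝ) (hβ : ContDiff ℝ (⊤ : ℕ∞) β) (hγ : ContDiff ℝ (⊤ : ℕ∞) γ) (p w : E3) :
    fderiv ℝ (fun p : E3 =>
        ((1 + β p * p.2.1 ^ 2, -(β p * p.1 * p.2.1), -p.2.1 / 2 - γ p * p.2.1 / 2) : E3)) p w
    = (fderiv ℝ β p w * p.2.1 ^ 2 + β p * (2 * p.2.1 * w.2.1),
       -(fderiv ℝ β p w * p.1 * p.2.1 + β p * (w.1 * p.2.1 + p.1 * w.2.1)),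
       -w.2.1 / 2 - (fderiv ℝ γ p w * p.2.1 + γ p * w.2.1) / 2) := by
  have hb : HasFDerivAt β (fderiv ℝ β p) p := ((hβ.differentiable (by simp)) p).hasFDerivAt
  have hg : HasFDerivAt γ (fderiv ℝ γ p) p := ((hγ.differentiable (by simp)) p).hasFDerivAt
  have hx : HasFDerivAt (fun q : E3 => q.1)
      (ContinuousLinearMap.fst ℝ ℝ (ℝ × ℝ)) p := hasFDerivAt_fst
  have hy : HasFDerivAt (fun q : E3 => q.2.1)
      ((ContinuousLinearMap.fst ℝ ℝ ℝ).comp (ContinuousLinearMap.snd ℝ ℝ (ℝ × ℝ))) p :=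
    hasFDerivAt_fst.comp p hasFDerivAt_snd
  have hfun : (fun p : E3 =>
      ((1 + β p * p.2.1 ^ 2, -(β p * p.1 * p.2.1), -p.2.1 / 2 - γ p * p.2.1 / 2) : E3))
      = (fun p : E3 => ((1 + β p * (p.2.1 * p.2.1), -(β p * p.1 * p.2.1),
          (-p.2.1 - γ p * p.2.1) * (1/2)) : E3)) := by
    funext q; ext <;> dsimp only <;> ring
  rw [hfun]
  have H := (((hasFDerivAt_const (1:ℝ) p).add (hb.mul (hy.mul hy))).prodMk
    ((((hb.mul hx).mul hy).neg).prodMk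
      (((hy.neg).sub (hg.mul hy)).mul_const (1/2:ℝ))))
  rw [(show HasFDerivAt (fun p : E3 => ((1 + β p * (p.2.1 * p.2.1), -(β p * p.1 * p.2.1),
            (-p.2.1 - γ p * p.2.1) * (1/2)) : E3)) _ p from H).fderiv]
  refine Prod.ext ?_ (Prod.ext ?_ ?_) <;> simp <;> ring

private lemma keyX2 (β γ : E3 → ℝ) (hβ : ContDiff ℝ (⊤ : ℕ∞) β) (hγ : ContDiff ℝ (⊤ : ℕ∞) γ) (p w : E3) :
    fderiv ℝ (fun p : E3 =>
        ((-(β p * p.1 * p.2.1), 1 + β p * p.1 ^ 2, p.1 / 2 + γ p * p.1 / 2) : E3)) p w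
    = (-(fderiv ℝ β p w * p.1 * p.2.1 + β p * (w.1 * p.2.1 + p.1 * w.2.1)),
       fderiv ℝ β p w * p.1 ^ 2 + β p * (2 * p.1 * w.1),
       w.1 / 2 + (fderiv ℝ γ p w * p.1 + γ p * w.1) / 2) := by
  have hb : HasFDerivAt β (fderiv ℝ β p) p := ((hβ.differentiable (by simp)) p).hasFDerivAt
  have hg : HasFDerivAt γ (fderiv ℝ γ p) p := ((hγ.differentiable (by simp)) p).hasFDerivAt
  have hx : HasFDerivAt (fun q : E3 => q.1)
      (ContinuousLinearMap.fst ℝ ℝ (ℝ × ℝ)) p := hasFDerivAt_fst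
  have hy : HasFDerivAt (fun q : E3 => q.2.1)
      ((ContinuousLinearMap.fst ℝ ℝ ℝ).comp (ContinuousLinearMap.snd ℝ ℝ (ℝ × ℝ))) p :=
    hasFDerivAt_fst.comp p hasFDerivAt_snd
  have hfun : (fun p : E3 =>
      ((-(β p * p.1 * p.2.1), 1 + β p * p.1 ^ 2, p.1 / 2 + γ p * p.1 / 2) : E3))
      = (fun p : E3 => ((-(β p * p.1 * p.2.1), 1 + β p * (p.1 * p.1),
          (p.1 + γ p * p.1) * (1/2)) : E3)) := by
    funext q; ext <;> dsimp only <;> ring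
  rw [hfun]
  have H := ((((hb.mul hx).mul hy).neg).prodMk
    (((hasFDerivAt_const (1:ℝ) p).add (hb.mul (hx.mul hx))).prodMk
      ((hx.add (hg.mul hx)).mul_const (1/2:ℝ))))
  rw [(show HasFDerivAt (fun p : E3 => ((-(β p * p.1 * p.2.1), 1 + β p * (p.1 * p.1),
            (p.1 + γ p * p.1) * (1/2)) : E3)) _ p from H).fderiv]
  refine Prod.ext ?_ (Prod.ext ?_ ?_) <;> simp <;> ring

private lemma keyQ (a c d : ℝ) (p w : E3) :
    fderiv ℝ (fun p : E3 =>
        1/2 * a * p.1 ^ 2 + c * p.1 * p.2.1 + 1/2 * d * p.2.1 ^ 2) p w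
    = a * p.1 * w.1 + c * (w.1 * p.2.1 + p.1 * w.2.1) + d * p.2.1 * w.2.1 := by
  have hx : HasFDerivAt (fun q : E3 => q.1)
      (ContinuousLinearMap.fst ℝ ℝ (ℝ × ℝ)) p := hasFDerivAt_fst
  have hy : HasFDerivAt (fun q : E3 => q.2.1)
      ((ContinuousLinearMap.fst ℝ ℝ ℝ).comp (ContinuousLinearMap.snd ℝ ℝ (ℝ × ℝ))) p :=
    hasFDerivAt_fst.comp p hasFDerivAt_snd
  have hfun : (fun p : E3 => 1/2 * a * p.1 ^ 2 + c * p.1 * p.2.1 + 1/2 * d * p.2.1 ^ 2)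
      = (fun p : E3 => (1/2*a) * (p.1 * p.1) + (c * (p.1 * p.2.1) + (1/2*d) * (p.2.1 * p.2.1))) := by
    funext q; ring
  rw [hfun]
  have H := (((hx.mul hx).const_mul (1/2*a)).add
    (((hx.mul hy).const_mul c).add ((hy.mul hy).const_mul (1/2*d))))
  rw [(show HasFDerivAt (fun p : E3 => (1/2*a) * (p.1 * p.1) + (c * (p.1 * p.2.1) + (1/2*d) * (p.2.1 * p.2.1))) _ p from H).fderiv]
  simp; ring

private lemma keyL (a c : ℝ) (p w : E3) :
    fderiv ℝ (fun p : E3 => a * p.1 + c * p.2.1) p w = a * w.1 + c * w.2.1 := by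
  have hx : HasFDerivAt (fun q : E3 => q.1)
      (ContinuousLinearMap.fst ℝ ℝ (ℝ × ℝ)) p := hasFDerivAt_fst
  have hy : HasFDerivAt (fun q : E3 => q.2.1)
      ((ContinuousLinearMap.fst ℝ ℝ ℝ).comp (ContinuousLinearMap.snd ℝ ℝ (ℝ × ℝ))) p :=
    hasFDerivAt_fst.comp p hasFDerivAt_snd
  have H := ((hx.const_mul a).add (hy.const_mul c))
  rw [(show HasFDerivAt (fun p : E3 => a * p.1 + c * p.2.1) _ p from H).fderiv]
  simp

private lemma contDiffQ (a c d : ℝ) :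
    ContDiff ℝ (⊤ : ℕ∞) (fun p : E3 => 1/2 * a * p.1 ^ 2 + c * p.1 * p.2.1 + 1/2 * d * p.2.1 ^ 2) := by
  fun_prop

private lemma contDiffL (a c : ℝ) : ContDiff ℝ (⊤ : ℕ∞) (fun p : E3 => a * p.1 + c * p.2.1) := by
  fun_prop

private lemma keyQ2 (a c d : ℝ) (u v : E3) :
    fderiv ℝ (fderiv ℝ (fun p : E3 =>
      1/2 * a * p.1 ^ 2 + c * p.1 * p.2.1 + 1/2 * d * p.2.1 ^ 2)) 0 u v
    = a * u.1 * v.1 + c * (v.1 * u.2.1 + u.1 * v.2.1) + d * u.2.1 * v.2.1 := by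
  rw [second_apply _ (contDiffQ a c d) u v]
  have h : (fun p : E3 => fderiv ℝ (fun p : E3 =>
      1/2 * a * p.1 ^ 2 + c * p.1 * p.2.1 + 1/2 * d * p.2.1 ^ 2) p v)
      = fun p : E3 => (a * v.1 + c * v.2.1) * p.1 + (c * v.1 + d * v.2.1) * p.2.1 :=
    funext fun p => by rw [keyQ]; ring
  rw [h, keyL]
  ring

private lemma keydet (β γ : E3 → ℝ) (hβ : ContDiff ℝ (⊤ : ℕ∞) β) (hγ : ContDiff ℝ (⊤ : ℕ∞) γ)
    (V U W : E3 → E3)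
    (hV : V = fun p : E3 =>
      ((1 + β p * p.2.1 ^ 2, -(β p * p.1 * p.2.1), -p.2.1 / 2 - γ p * p.2.1 / 2) : E3))
    (hU : U = fun p : E3 =>
      ((-(β p * p.1 * p.2.1), 1 + β p * p.1 ^ 2, p.1 / 2 + γ p * p.1 / 2) : E3))
    (hW : ∀ p, W p = fderiv ℝ V p (U p) - fderiv ℝ U p (V p)) (p : E3) :
    (Matrix.of ![![(V p).1, (U p).1, (W p).1],
        ![(V p).2.1, (U p).2.1, (W p).2.1],
        ![(V p).2.2, (U p).2.2, (W p).2.2]]).det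
    = -(1 + γ p + (p.1 * fderiv ℝ γ p (V p) + p.2.1 * fderiv ℝ γ p (U p)) / 2)
      + ((p.1 ^ 2 + p.2.1 ^ 2) / 2) *
        ((1 + γ p) * (p.2.1 * fderiv ℝ β p (U p) + p.1 * fderiv ℝ β p (V p))
          - β p * (p.2.1 * fderiv ℝ γ p (U p) + p.1 * fderiv ℝ γ p (V p))) := by
  have hWp := hW p
  rw [hV, hU] at hWp ⊢
  rw [Matrix.det_fin_three]
  simp only [Matrix.of_apply, Matrix.cons_val', Matrix.cons_val_zero, Matrix.cons_val_one,
    Matrix.head_cons, Matrix.empty_val', Matrix.cons_val_fin_one, Matrix.head_fin_const,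
    Matrix.cons_val_two, Matrix.tail_cons]
  rw [hWp, keyX1 β γ hβ hγ, keyX2 β γ hβ hγ]
  simp only [Prod.fst_sub, Prod.snd_sub]
  ring

end Helpers
/-- In the normal coordinates of Agrachev–El-Alaoui–Gauthier–Chakir, the density of the
Popp volume satisfies `|det A(p)|⁻¹ = 1 - 2 γ^[2](x,y) + O(‖p‖³)` (Lemma 2.4 of the paper). -/
theorem stmt1 (β γ : ℝ × ℝ × ℝ → ℝ) (hβ : ContDiff ℝ (⊤ : ℕ∞) β) (hγ : ContDiff ℝ (⊤ : ℕ∞) γ)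
    (hβ0 : ∀ z : ℝ, β (0, 0, z) = 0) (hγ0 : ∀ z : ℝ, γ (0, 0, z) = 0)
    (hγx : ∀ z : ℝ, fderiv ℝ γ (0, 0, z) (1, 0, 0) = 0)
    (hγy : ∀ z : ℝ, fderiv ℝ γ (0, 0, z) (0, 1, 0) = 0)
    (X₁ X₂ X₃ : ℝ × ℝ × ℝ → ℝ × ℝ × ℝ)
    (hX₁ : ∀ p : ℝ × ℝ × ℝ,
      X₁ p = (1 + β p * p.2.1 ^ 2, -(β p * p.1 * p.2.1), -p.2.1 / 2 - γ p * p.2.1 / 2))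
    (hX₂ : ∀ p : ℝ × ℝ × ℝ,
      X₂ p = (-(β p * p.1 * p.2.1), 1 + β p * p.1 ^ 2, p.1 / 2 + γ p * p.1 / 2))
    (hX₃ : ∀ p : ℝ × ℝ × ℝ, X₃ p = fderiv ℝ X₁ p (X₂ p) - fderiv ℝ X₂ p (X₁ p))
    (A : ℝ × ℝ × ℝ → Matrix (Fin 3) (Fin 3) ℝ)
    (hA : ∀ p : ℝ × ℝ × ℝ, A p = Matrix.of
      ![![(X₁ p).1, (X₂ p).1, (X₃ p).1],
        ![(X₁ p).2.1, (X₂ p).2.1, (X₃ p).2.1],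
        ![(X₁ p).2.2, (X₂ p).2.2, (X₃ p).2.2]])
    (q : ℝ → ℝ → ℝ)
    (hq : ∀ x y : ℝ, q x y =
      (1 / 2) * (fderiv ℝ (fun p => fderiv ℝ γ p (1, 0, 0)) 0 (1, 0, 0)) * x ^ 2
      + (fderiv ℝ (fun p => fderiv ℝ γ p (1, 0, 0)) 0 (0, 1, 0)) * x * y
      + (1 / 2) * (fderiv ℝ (fun p => fderiv ℝ γ p (0, 1, 0)) 0 (0, 1, 0)) * y ^ 2) :
    (fun p : ℝ × ℝ × ℝ => |(A p).det|⁻¹ - (1 - 2 * q p.1 p.2.1))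
      =O[nhds 0] (fun p : ℝ × ℝ × ℝ => ‖p‖ ^ 3) := by
  have hγd : Differentiable ℝ γ := hγ.differentiable (by simp)
  have hdγ : ContDiff ℝ (⊤ : ℕ∞) (fderiv ℝ γ) := hγ.fderiv_right (by simp)
  set a : ℝ := fderiv ℝ (fun p => fderiv ℝ γ p (1, 0, 0)) 0 (1, 0, 0) with ha
  set c : ℝ := fderiv ℝ (fun p => fderiv ℝ γ p (1, 0, 0)) 0 (0, 1, 0) with hc
  set d : ℝ := fderiv ℝ (fun p => fderiv ℝ γ p (0, 1, 0)) 0 (0, 1, 0) with hd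
  have hF1 : ContDiff ℝ (⊤ : ℕ∞) (fun p : E3 => fderiv ℝ γ p ((1:ℝ),(0:ℝ),(0:ℝ))) :=
    hdγ.clm_apply contDiff_const
  have hF2 : ContDiff ℝ (⊤ : ℕ∞) (fun p : E3 => fderiv ℝ γ p ((0:ℝ),(1:ℝ),(0:ℝ))) :=
    hdγ.clm_apply contDiff_const
  have hF3 : ContDiff ℝ (⊤ : ℕ∞) (fun p : E3 => fderiv ℝ γ p ((0:ℝ),(0:ℝ),(1:ℝ))) :=
    hdγ.clm_apply contDiff_const
  have g0 : γ 0 = 0 := hγ0 0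
  have b0 : β 0 = 0 := hβ0 0
  have gx0 : fderiv ℝ γ 0 ((1:ℝ),(0:ℝ),(0:ℝ)) = 0 := hγx 0
  have gy0 : fderiv ℝ γ 0 ((0:ℝ),(1:ℝ),(0:ℝ)) = 0 := hγy 0
  have gz0 : fderiv ℝ γ 0 ((0:ℝ),(0:ℝ),(1:ℝ)) = 0 := axis_deriv γ hγd hγ0 0
  have Dγ0 : fderiv ℝ γ 0 = 0 := by
    apply ContinuousLinearMap.ext; intro v
    rw [decomp3 v, map_add, map_add, map_smul, map_smul, map_smul, gx0, gy0, gz0]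
    simp
  have h11 : fderiv ℝ (fun p => fderiv ℝ γ p ((1:ℝ),(0:ℝ),(0:ℝ))) 0 ((1:ℝ),(0:ℝ),(0:ℝ)) = a := rfl
  have h21 : fderiv ℝ (fun p => fderiv ℝ γ p ((1:ℝ),(0:ℝ),(0:ℝ))) 0 ((0:ℝ),(1:ℝ),(0:ℝ)) = c := rfl
  have h12 : fderiv ℝ (fun p => fderiv ℝ γ p ((0:ℝ),(1:ℝ),(0:ℝ))) 0 ((1:ℝ),(0:ℝ),(0:ℝ)) = c := by
    rw [symm_second γ hγ]
  have h22 : fderiv ℝ (fun p => fderiv ℝ γ p ((0:ℝ),(1:ℝ),(0:ℝ))) 0 ((0:ℝ),(1:ℝ),(0:ℝ)) = d := rfl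
  have h31 : fderiv ℝ (fun p => fderiv ℝ γ p ((1:ℝ),(0:ℝ),(0:ℝ))) 0 ((0:ℝ),(0:ℝ),(1:ℝ)) = 0 :=
    axis_deriv _ (hF1.differentiable (by simp)) hγx 0
  have h32 : fderiv ℝ (fun p => fderiv ℝ γ p ((0:ℝ),(1:ℝ),(0:ℝ))) 0 ((0:ℝ),(0:ℝ),(1:ℝ)) = 0 :=
    axis_deriv _ (hF2.differentiable (by simp)) hγy 0
  have hF3axis : ∀ z : ℝ, fderiv ℝ γ (0,0,z) ((0:ℝ),(0:ℝ),(1:ℝ)) = 0 := fun z =>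
    axis_deriv γ hγd hγ0 z
  have h13 : fderiv ℝ (fun p => fderiv ℝ γ p ((0:ℝ),(0:ℝ),(1:ℝ))) 0 ((1:ℝ),(0:ℝ),(0:ℝ)) = 0 := by
    rw [symm_second γ hγ]; exact h31
  have h23 : fderiv ℝ (fun p => fderiv ℝ γ p ((0:ℝ),(0:ℝ),(1:ℝ))) 0 ((0:ℝ),(1:ℝ),(0:ℝ)) = 0 := by
    rw [symm_second γ hγ]; exact h32
  have h33 : fderiv ℝ (fun p => fderiv ℝ γ p ((0:ℝ),(0:ℝ),(1:ℝ))) 0 ((0:ℝ),(0:ℝ),(1:ℝ)) = 0 :=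
    axis_deriv _ (hF3.differentiable (by simp)) hF3axis 0
  have hγ2 : ∀ u v : E3, fderiv ℝ (fderiv ℝ γ) 0 u v
      = a * u.1 * v.1 + c * (v.1 * u.2.1 + u.1 * v.2.1) + d * u.2.1 * v.2.1 := by
    intro u v
    have key : ∀ w : E3, fderiv ℝ (fderiv ℝ γ) 0 w
        = w.1 • fderiv ℝ (fderiv ℝ γ) 0 ((1:ℝ),(0:ℝ),(0:ℝ))
        + w.2.1 • fderiv ℝ (fderiv ℝ γ) 0 ((0:ℝ),(1:ℝ),(0:ℝ))
        + w.2.2 • fderiv ℝ (fderiv ℝ γ) 0 ((0:ℝ),(0:ℝ),(1:ℝ)) := by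
      intro w
      conv_lhs => rw [decomp3 w]
      simp only [map_add, map_smul]
    have keyv : ∀ z w : E3, fderiv ℝ (fderiv ℝ γ) 0 z w
        = w.1 * fderiv ℝ (fderiv ℝ γ) 0 z ((1:ℝ),(0:ℝ),(0:ℝ))
        + w.2.1 * fderiv ℝ (fderiv ℝ γ) 0 z ((0:ℝ),(1:ℝ),(0:ℝ))
        + w.2.2 * fderiv ℝ (fderiv ℝ γ) 0 z ((0:ℝ),(0:ℝ),(1:ℝ)) := by
      intro z w
      conv_lhs => rw [decomp3 w]
      simp only [map_add, map_smul, smul_eq_mul]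
    rw [key u]
    simp only [ContinuousLinearMap.add_apply, ContinuousLinearMap.smul_apply, smul_eq_mul]
    rw [keyv ((1:ℝ),(0:ℝ),(0:ℝ)) v, keyv ((0:ℝ),(1:ℝ),(0:ℝ)) v, keyv ((0:ℝ),(0:ℝ),(1:ℝ)) v]
    simp only [second_apply γ hγ]
    rw [h11, h21, h12, h22, h31, h32, h13, h23, h33]
    ring
  -- big-O pieces
  have hQc := contDiffQ a c d
  have hQd : Differentiable ℝ (fun p : E3 =>
      1/2 * a * p.1 ^ 2 + c * p.1 * p.2.1 + 1/2 * d * p.2.1 ^ 2) := hQc.differentiable (by simp)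
  have hsub1 : ∀ p : E3, fderiv ℝ (fun p : E3 => γ p -
      (1/2 * a * p.1 ^ 2 + c * p.1 * p.2.1 + 1/2 * d * p.2.1 ^ 2)) p
      = fderiv ℝ γ p - fderiv ℝ (fun p : E3 =>
      1/2 * a * p.1 ^ 2 + c * p.1 * p.2.1 + 1/2 * d * p.2.1 ^ 2) p :=
    fun p => fderiv_sub (hγd p) (hQd p)
  have hS1 : (fun p : E3 => γ p -
      (1/2 * a * p.1 ^ 2 + c * p.1 * p.2.1 + 1/2 * d * p.2.1 ^ 2))
      =O[nhds 0] fun p : E3 => ‖p‖ ^ 3 := by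
    refine bigO3 (hγ.sub hQc) (by simp [g0]) ?_ ?_
    · apply ContinuousLinearMap.ext; intro v
      rw [hsub1 0]
      simp only [ContinuousLinearMap.sub_apply, Dγ0, ContinuousLinearMap.zero_apply, keyQ]
      simp
    · rw [funext hsub1]
      have hs : fderiv ℝ (fun p : E3 => fderiv ℝ γ p - fderiv ℝ (fun p : E3 =>
          1/2 * a * p.1 ^ 2 + c * p.1 * p.2.1 + 1/2 * d * p.2.1 ^ 2) p) 0
          = fderiv ℝ (fderiv ℝ γ) 0 - fderiv ℝ (fderiv ℝ (fun p : E3 =>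
          1/2 * a * p.1 ^ 2 + c * p.1 * p.2.1 + 1/2 * d * p.2.1 ^ 2)) 0 :=
        fderiv_sub ((hdγ.differentiable (by simp)) 0)
          (((hQc.fderiv_right (m := (⊤ : ℕ∞)) (by simp)).differentiable (by simp)) 0)
      rw [hs]
      apply ContinuousLinearMap.ext; intro u
      apply ContinuousLinearMap.ext; intro v
      simp only [ContinuousLinearMap.sub_apply, ContinuousLinearMap.zero_apply]
      rw [hγ2 u v, keyQ2 a c d u v]
      ring
  have hS4 : (fun p : E3 => fderiv ℝ γ p ((1:ℝ),(0:ℝ),(0:ℝ)) - (a * p.1 + c * p.2.1))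
      =O[nhds 0] fun p : E3 => ‖p‖ ^ 2 := by
    refine bigO2 (hF1.sub (contDiffL a c)) (by simp only [gx0]; simp) ?_
    apply ContinuousLinearMap.ext; intro v
    have hsub4 : fderiv ℝ (fun p : E3 => fderiv ℝ γ p ((1:ℝ),(0:ℝ),(0:ℝ)) -
        (a * p.1 + c * p.2.1)) 0
        = fderiv ℝ (fun p : E3 => fderiv ℝ γ p ((1:ℝ),(0:ℝ),(0:ℝ))) 0 -
          fderiv ℝ (fun p : E3 => a * p.1 + c * p.2.1) 0 :=
      fderiv_sub ((hF1.differentiable (by simp)) 0) (((contDiffL a c).differentiable (by simp)) 0)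
    rw [hsub4]
    simp only [ContinuousLinearMap.sub_apply, ContinuousLinearMap.zero_apply, keyL]
    rw [← second_apply γ hγ, hγ2]
    simp
  have hS5 : (fun p : E3 => fderiv ℝ γ p ((0:ℝ),(1:ℝ),(0:ℝ)) - (c * p.1 + d * p.2.1))
      =O[nhds 0] fun p : E3 => ‖p‖ ^ 2 := by
    refine bigO2 (hF2.sub (contDiffL c d)) (by simp only [gy0]; simp) ?_
    apply ContinuousLinearMap.ext; intro v
    have hsub5 : fderiv ℝ (fun p : E3 => fderiv ℝ γ p ((0:ℝ),(1:ℝ),(0:ℝ)) -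
        (c * p.1 + d * p.2.1)) 0
        = fderiv ℝ (fun p : E3 => fderiv ℝ γ p ((0:ℝ),(1:ℝ),(0:ℝ))) 0 -
          fderiv ℝ (fun p : E3 => c * p.1 + d * p.2.1) 0 :=
      fderiv_sub ((hF2.differentiable (by simp)) 0) (((contDiffL c d).differentiable (by simp)) 0)
    rw [hsub5]
    simp only [ContinuousLinearMap.sub_apply, ContinuousLinearMap.zero_apply, keyL]
    rw [← second_apply γ hγ, hγ2]
    simp
  -- smoothness of the vector fields
  have hy3 : ContDiff ℝ (⊤ : ℕ∞) (fun p : E3 => p.2.1) := contDiff_fst.comp contDiff_snd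
  have hX1c : ContDiff ℝ (⊤ : ℕ∞) X₁ := by
    rw [funext hX₁]
    exact (contDiff_const.add (hβ.mul (hy3.pow 2))).prodMk
      ((((hβ.mul contDiff_fst).mul hy3).neg).prodMk
        ((hy3.neg.div_const 2).sub ((hγ.mul hy3).div_const 2)))
  have hX2c : ContDiff ℝ (⊤ : ℕ∞) X₂ := by
    rw [funext hX₂]
    exact ((((hβ.mul contDiff_fst).mul hy3).neg).prodMk
      ((contDiff_const.add (hβ.mul (contDiff_fst.pow 2))).prodMk
        ((contDiff_fst.div_const 2).add ((hγ.mul contDiff_fst).div_const 2))))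
  have hβ1 : β =O[nhds 0] fun p : E3 => ‖p‖ ^ 1 := bigO1 hβ b0
  have hDγ1 : (fun p : E3 => fderiv ℝ γ p) =O[nhds 0] fun p : E3 => ‖p‖ ^ 1 := bigO1 hdγ Dγ0
  have hVe1 : (fun p : E3 => X₁ p - ((1:ℝ),(0:ℝ),(0:ℝ))) =O[nhds 0] fun p : E3 => ‖p‖ ^ 1 := by
    refine bigO1 (hX1c.sub contDiff_const) ?_
    rw [hX₁ 0]
    simp [b0, g0]
  have hUe2 : (fun p : E3 => X₂ p - ((0:ℝ),(1:ℝ),(0:ℝ))) =O[nhds 0] fun p : E3 => ‖p‖ ^ 1 := by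
    refine bigO1 (hX2c.sub contDiff_const) ?_
    rw [hX₂ 0]
    simp [b0, g0]
  have hGv2 : (fun p : E3 => fderiv ℝ γ p (X₁ p - ((1:ℝ),(0:ℝ),(0:ℝ))))
      =O[nhds 0] fun p : E3 => ‖p‖ ^ 2 := by
    have hb : ∀ p : E3, ‖fderiv ℝ γ p (X₁ p - ((1:ℝ),(0:ℝ),(0:ℝ)))‖
        ≤ ‖‖fderiv ℝ γ p‖ * ‖X₁ p - ((1:ℝ),(0:ℝ),(0:ℝ))‖‖ := by
      intro p
      rw [Real.norm_eq_abs (‖fderiv ℝ γ p‖ * _),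
        abs_of_nonneg (mul_nonneg (norm_nonneg _) (norm_nonneg _))]
      exact (fderiv ℝ γ p).le_opNorm _
    exact (Asymptotics.isBigO_of_le _ hb).trans (mulpow hDγ1.norm_left hVe1.norm_left)
  have hGu2 : (fun p : E3 => fderiv ℝ γ p (X₂ p - ((0:ℝ),(1:ℝ),(0:ℝ))))
      =O[nhds 0] fun p : E3 => ‖p‖ ^ 2 := by
    have hb : ∀ p : E3, ‖fderiv ℝ γ p (X₂ p - ((0:ℝ),(1:ℝ),(0:ℝ)))‖
        ≤ ‖‖fderiv ℝ γ p‖ * ‖X₂ p - ((0:ℝ),(1:ℝ),(0:ℝ))‖‖ := by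
      intro p
      rw [Real.norm_eq_abs (‖fderiv ℝ γ p‖ * _),
        abs_of_nonneg (mul_nonneg (norm_nonneg _) (norm_nonneg _))]
      exact (fderiv ℝ γ p).le_opNorm _
    exact (Asymptotics.isBigO_of_le _ hb).trans (mulpow hDγ1.norm_left hUe2.norm_left)
  -- O(1) bounds
  have hBuO : (fun p : E3 => fderiv ℝ β p (X₂ p)) =O[nhds 0] fun p : E3 => ‖p‖ ^ 0 :=
    oneO (((hβ.continuous_fderiv (by simp)).clm_apply hX2c.continuous).tendsto 0)
  have hBvO : (fun p : E3 => fderiv ℝ β p (X₁ p)) =O[nhds 0] fun p : E3 => ‖p‖ ^ 0 :=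
    oneO (((hβ.continuous_fderiv (by simp)).clm_apply hX1c.continuous).tendsto 0)
  have hGuO : (fun p : E3 => fderiv ℝ γ p (X₂ p)) =O[nhds 0] fun p : E3 => ‖p‖ ^ 0 :=
    oneO (((hγ.continuous_fderiv (by simp)).clm_apply hX2c.continuous).tendsto 0)
  have hGvO : (fun p : E3 => fderiv ℝ γ p (X₁ p)) =O[nhds 0] fun p : E3 => ‖p‖ ^ 0 :=
    oneO (((hγ.continuous_fderiv (by simp)).clm_apply hX1c.continuous).tendsto 0)
  have hgO : (fun p : E3 => 1 + γ p) =O[nhds 0] fun p : E3 => ‖p‖ ^ 0 :=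
    oneO ((continuous_const.add hγ.continuous).tendsto 0)
  -- the quadratic form is O(‖p‖²)
  have hq2 : (fun p : E3 => 1/2 * a * p.1 ^ 2 + c * p.1 * p.2.1 + 1/2 * d * p.2.1 ^ 2)
      =O[nhds 0] fun p : E3 => ‖p‖ ^ 2 := by
    have he : (fun p : E3 => 1/2 * a * p.1 ^ 2 + c * p.1 * p.2.1 + 1/2 * d * p.2.1 ^ 2)
        = fun p : E3 => (1/2*a) * (p.1 * p.1) + (c * (p.1 * p.2.1) + (1/2*d) * (p.2.1 * p.2.1)) := by
      funext p; ring
    rw [he]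
    exact ((mulpow fstO fstO).const_mul_left _).add
      (((mulpow fstO sndO).const_mul_left _).add ((mulpow sndO sndO).const_mul_left _))
  have hhalfsq : (fun p : E3 => (p.1 ^ 2 + p.2.1 ^ 2) / 2) =O[nhds 0]
      fun p : E3 => ‖p‖ ^ 2 := by
    have he : (fun p : E3 => (p.1 ^ 2 + p.2.1 ^ 2) / 2)
        = fun p : E3 => (1/2 : ℝ) * (p.1 * p.1) + ((1/2 : ℝ) * (p.2.1 * p.2.1)) := by
      funext p; ring
    rw [he]
    exact ((mulpow fstO fstO).const_mul_left _).add ((mulpow sndO sndO).const_mul_left _)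
  -- the remainder factor is O(‖p‖)
  have hlin : (fun p : E3 =>
      (1 + γ p) * (p.2.1 * fderiv ℝ β p (X₂ p) + p.1 * fderiv ℝ β p (X₁ p))
      - β p * (p.2.1 * fderiv ℝ γ p (X₂ p) + p.1 * fderiv ℝ γ p (X₁ p)))
      =O[nhds 0] fun p : E3 => ‖p‖ ^ 1 := by
    have t1 : (fun p : E3 => p.2.1 * fderiv ℝ β p (X₂ p) + p.1 * fderiv ℝ β p (X₁ p))
        =O[nhds 0] fun p : E3 => ‖p‖ ^ 1 := (mulpow sndO hBuO).add (mulpow fstO hBvO)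
    have t2 : (fun p : E3 => p.2.1 * fderiv ℝ γ p (X₂ p) + p.1 * fderiv ℝ γ p (X₁ p))
        =O[nhds 0] fun p : E3 => ‖p‖ ^ 1 := (mulpow sndO hGuO).add (mulpow fstO hGvO)
    have t3 : (fun p : E3 => β p * (p.2.1 * fderiv ℝ γ p (X₂ p) + p.1 * fderiv ℝ γ p (X₁ p)))
        =O[nhds 0] fun p : E3 => ‖p‖ ^ 1 := (mulpow hβ1 t2).trans (powO (by norm_num))
    exact ((mulpow hgO t1) : _).sub t3
  -- main estimate : det + 1 + 2q = O(‖p‖³)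
  have hR : (fun p : E3 => (A p).det + (1 + 2 * q p.1 p.2.1)) =O[nhds 0]
      fun p : E3 => ‖p‖ ^ 3 := by
    have hRe : (fun p : E3 => (A p).det + (1 + 2 * q p.1 p.2.1)) = fun p : E3 =>
        -(γ p - (1/2 * a * p.1 ^ 2 + c * p.1 * p.2.1 + 1/2 * d * p.2.1 ^ 2))
        - 1/2 * (p.1 * fderiv ℝ γ p (X₁ p - ((1:ℝ),(0:ℝ),(0:ℝ))))
        - 1/2 * (p.2.1 * fderiv ℝ γ p (X₂ p - ((0:ℝ),(1:ℝ),(0:ℝ))))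
        - 1/2 * (p.1 * (fderiv ℝ γ p ((1:ℝ),(0:ℝ),(0:ℝ)) - (a * p.1 + c * p.2.1)))
        - 1/2 * (p.2.1 * (fderiv ℝ γ p ((0:ℝ),(1:ℝ),(0:ℝ)) - (c * p.1 + d * p.2.1)))
        + ((p.1 ^ 2 + p.2.1 ^ 2) / 2) *
          ((1 + γ p) * (p.2.1 * fderiv ℝ β p (X₂ p) + p.1 * fderiv ℝ β p (X₁ p))
            - β p * (p.2.1 * fderiv ℝ γ p (X₂ p) + p.1 * fderiv ℝ γ p (X₁ p))) := by
      funext p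
      rw [hA p, keydet β γ hβ hγ X₁ X₂ X₃ (funext hX₁) (funext hX₂) hX₃ p, hq p.1 p.2.1,
        (fderiv ℝ γ p).map_sub (X₁ p) ((1:ℝ),(0:ℝ),(0:ℝ)),
        (fderiv ℝ γ p).map_sub (X₂ p) ((0:ℝ),(1:ℝ),(0:ℝ))]
      ring
    rw [hRe]
    exact (((((hS1.neg_left).sub ((mulpow fstO hGv2).const_mul_left _)).sub
      ((mulpow sndO hGu2).const_mul_left _)).sub
      ((mulpow fstO hS4).const_mul_left _)).sub
      ((mulpow sndO hS5).const_mul_left _)).add (mulpow hhalfsq hlin)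
  -- pass to |det|⁻¹
  have hqe : (fun p : E3 => q p.1 p.2.1) = fun p : E3 =>
      1/2 * a * p.1 ^ 2 + c * p.1 * p.2.1 + 1/2 * d * p.2.1 ^ 2 := by
    funext p; rw [hq p.1 p.2.1]
  have hqO : (fun p : E3 => q p.1 p.2.1) =O[nhds 0] fun p : E3 => ‖p‖ ^ 2 := by
    rw [hqe]; exact hq2
  have h3t : Filter.Tendsto (fun p : E3 => ‖p‖ ^ 3) (nhds 0) (nhds 0) := by
    have := (show Continuous fun p : E3 => ‖p‖ ^ 3 from continuous_norm.pow 3).tendsto (0 : E3)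
    simpa using this
  have h2t : Filter.Tendsto (fun p : E3 => ‖p‖ ^ 2) (nhds 0) (nhds 0) := by
    have := (show Continuous fun p : E3 => ‖p‖ ^ 2 from continuous_norm.pow 2).tendsto (0 : E3)
    simpa using this
  have hRt : Filter.Tendsto (fun p : E3 => (A p).det + (1 + 2 * q p.1 p.2.1))
      (nhds 0) (nhds 0) := hR.trans_tendsto h3t
  have hQt : Filter.Tendsto (fun p : E3 => q p.1 p.2.1) (nhds 0) (nhds 0) :=
    hqO.trans_tendsto h2t
  have hN : (fun p : E3 => (4 * (q p.1 p.2.1 * q p.1 p.2.1)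
      + ((A p).det + (1 + 2 * q p.1 p.2.1)))
      - 2 * (q p.1 p.2.1 * ((A p).det + (1 + 2 * q p.1 p.2.1))))
      =O[nhds 0] fun p : E3 => ‖p‖ ^ 3 := by
    refine (IsBigO.add ?_ hR).sub ?_
    · exact ((mulpow hqO hqO).trans (powO (by norm_num))).const_mul_left _
    · exact ((mulpow hqO hR).trans (powO (by norm_num))).const_mul_left _
  refine (IsBigO.of_bound 2 ?_).trans hN
  have hRev : ∀ᶠ p : E3 in nhds 0, |(A p).det + (1 + 2 * q p.1 p.2.1)| < 1/8 := by
    have := Metric.tendsto_nhds.mp hRt (1/8) (by norm_num)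
    simpa [Real.dist_eq] using this
  have hQev : ∀ᶠ p : E3 in nhds 0, |q p.1 p.2.1| < 1/8 := by
    have := Metric.tendsto_nhds.mp hQt (1/8) (by norm_num)
    simpa [Real.dist_eq] using this
  filter_upwards [hRev, hQev] with p hr hs
  set r := (A p).det + (1 + 2 * q p.1 p.2.1) with hrdef
  set s := q p.1 p.2.1 with hsdef
  have hD : (A p).det = r - 1 - 2 * s := by rw [hrdef]; ring
  obtain ⟨hr1, hr2⟩ := abs_lt.mp hr
  obtain ⟨hs1, hs2⟩ := abs_lt.mp hs
  have hDneg : (A p).det < 0 := by rw [hD]; linarith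
  have hDhalf : (1:ℝ)/2 ≤ -(A p).det := by rw [hD]; linarith
  have hDval : -(A p).det = 1 + 2 * s - r := by rw [hD]; ring
  have h0 : (1 + 2 * s - r) ≠ 0 := by rw [← hDval]; linarith
  rw [abs_of_neg hDneg]
  have hT : (-(A p).det)⁻¹ - (1 - 2 * s)
      = ((4 * (s * s) + r) - 2 * (s * r)) * (-(A p).det)⁻¹ := by
    rw [hDval]
    field_simp
    ring
  rw [hT]
  rw [Real.norm_eq_abs, Real.norm_eq_abs, abs_mul]
  have hinv : |(-(A p).det)⁻¹| ≤ 2 := by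
    rw [abs_of_nonneg (inv_nonneg.mpr (by linarith))]
    rw [show (2:ℝ) = ((1:ℝ)/2)⁻¹ by norm_num]
    exact inv_anti₀ (by norm_num) hDhalf
  calc |(4 * (s * s) + r) - 2 * (s * r)| * |(-(A p).det)⁻¹|
      ≤ |(4 * (s * s) + r) - 2 * (s * r)| * 2 :=
        mul_le_mul_of_nonneg_left hinv (abs_nonneg _)
    _ = 2 * |(4 * (s * s) + r) - 2 * (s * r)| := by ring
end

section
/- Let β, γ : ℝ³ → ℝ be smooth functions satisfying β(0,0,z) = γ(0,0,z) = ∂γ/∂x(0,0,z) = ∂γ/∂y(0,0,z) = 0 for all z ∈ ℝ. Define X₁(x,y,z) = (1+β(x,y,z)y², −β(x,y,z)xy, −y/2 − γ(x,y,z)y/2) and X₂(x,y,z) = (−β(x,y,z)xy, 1+β(x,y,z)x², x/2 + γ(x,y,z)x/2). For ε > 0 let δ_ε(x,y,z) = (εx, εy, ε²z) and define X_i^ε(p) = ε·δ_{1/ε}(X_i(δ_ε(p))) for i = 1,2. Then for every fixed p = (x,y,z) ∈ ℝ³, as ε → 0⁺: X₁^ε(p) − (1, 0, −y/2 − ε²(y/2)q(x,y))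 = O(ε³) and X₂^ε(p) − (0, 1, x/2 + ε²(x/2)q(x,y)) = O(ε³), where q(x,y) = (1/2)∂²γ/∂x²(0)·x² + ∂²γ/∂x∂y(0)·xy + (1/2)∂²γ/∂y²(0)·y². -/
open Real Asymptotics Filter


open Asymptotics Filter

lemma step_lemma {f f' : ℝ → ℝ} (hd : ∀ t, HasDerivAt f (f' t) t)
    (hc : Continuous f') (h0 : f 0 = 0) {n : ℕ}
    (h : f' =O[nhds 0] fun ε => ε ^ n) : f =O[nhds 0] fun ε => ε ^ (n + 1) := by
  rcases h.exists_pos with ⟨C, hCpos, hbd⟩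
  rw [IsBigOWith] at hbd
  rcases Metric.eventually_nhds_iff.1 hbd with ⟨δ, hδ, hb⟩
  rw [isBigO_iff]
  refine ⟨C, Metric.eventually_nhds_iff.2 ⟨δ, hδ, ?_⟩⟩
  intro ε hε
  have hεδ : |ε| < δ := by simpa [Real.dist_eq] using hε
  have key : ∫ t in (0:ℝ)..ε, f' t = f ε - f 0 :=
    intervalIntegral.integral_eq_sub_of_hasDerivAt (fun t _ => hd t)
      (hc.intervalIntegrable 0 ε)
  have hbound : ∀ t ∈ Set.uIoc (0:ℝ) ε, ‖f' t‖ ≤ C * |ε| ^ n := by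
    intro t ht
    have ht' : |t| ≤ |ε| := by
      rcases Set.mem_uIoc.1 ht with ⟨h1, h2⟩ | ⟨h1, h2⟩ <;>
        rw [abs_le] <;> constructor <;> nlinarith [le_abs_self ε, neg_abs_le ε]
    have := hb (y := t) (by rw [Real.dist_eq]; simpa using lt_of_le_of_lt ht' hεδ)
    calc ‖f' t‖ ≤ C * ‖t ^ n‖ := this
      _ ≤ C * |ε| ^ n := by
          rw [Real.norm_eq_abs, abs_pow]
          exact mul_le_mul_of_nonneg_left (pow_le_pow_left₀ (abs_nonneg t) ht' n) hCpos.le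
  have := intervalIntegral.norm_integral_le_of_norm_le_const hbound
  rw [key, h0, sub_zero, sub_zero] at this
  calc ‖f ε‖ ≤ C * |ε| ^ n * |ε| := this
    _ = C * ‖ε ^ (n+1)‖ := by rw [Real.norm_eq_abs, abs_pow, pow_succ]; ring

lemma cube_lemma {f f' f'' : ℝ → ℝ}
    (hd1 : ∀ t, HasDerivAt f (f' t) t) (hd2 : ∀ t, HasDerivAt f' (f'' t) t)
    (hc2 : Continuous f'') (hdiff : DifferentiableAt ℝ f'' 0)
    (h0 : f 0 = 0) (h1 : f' 0 = 0) (h2 : f'' 0 = 0) :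
    f =O[nhds 0] fun ε => ε ^ 3 := by
  have hb2 : f'' =O[nhds 0] fun ε => ε ^ 1 := by
    have := hdiff.hasFDerivAt.isBigO_sub
    simpa [h2] using this
  have hb1 : f' =O[nhds 0] fun ε => ε ^ 2 := step_lemma hd2 hc2 h1 hb2
  have hc1 : Continuous f' :=
    continuous_iff_continuousAt.2 fun t => (hd2 t).continuousAt
  exact step_lemma hd1 hc1 h0 hb1

lemma gamma_big {γ : ℝ × ℝ × ℝ → ℝ} (hγ : ContDiff ℝ (⊤ : ℕ∞) γ)
    (x y z Q : ℝ)
    (h0 : γ 0 = 0)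
    (h1 : fderiv ℝ γ 0 (x, y, 0) = 0)
    (hz0 : fderiv ℝ γ 0 (0, 0, 2 * z) = 0)
    (h2 : (fderiv ℝ (fderiv ℝ γ) 0 (x, y, 0)) (x, y, 0) = 2 * Q) :
    (fun ε : ℝ => γ (ε * x, ε * y, ε ^ 2 * z) - ε ^ 2 * Q) =O[nhds 0]
      fun ε => ε ^ 3 := by
  set c : ℝ → ℝ × ℝ × ℝ := fun ε => (ε * x, ε * y, ε ^ 2 * z) with hcdef
  have hc : ∀ ε : ℝ, HasDerivAt c (x, y, 2 * ε * z) ε := by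
    intro ε
    have h1' : HasDerivAt (fun ε : ℝ => ε * x) x ε := hasDerivAt_mul_const x
    have h2' : HasDerivAt (fun ε : ℝ => ε * y) y ε := hasDerivAt_mul_const y
    have h3' : HasDerivAt (fun ε : ℝ => ε ^ 2 * z) (2 * ε * z) ε := by
      have := (hasDerivAt_pow 2 ε).mul_const z
      exact this.congr_deriv (by push_cast; ring)
    exact h1'.prodMk (h2'.prodMk h3')
  have hc0 : c 0 = 0 := by simp [hcdef, Prod.ext_iff]
  have hu : ∀ ε : ℝ, HasDerivAt (fun ε : ℝ => ((x, y, 2 * ε * z) : ℝ × ℝ × ℝ))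
      ((0, 0, 2 * z) : ℝ × ℝ × ℝ) ε := by
    intro ε
    have h3' : HasDerivAt (fun ε : ℝ => 2 * ε * z) (2 * z) ε := by
      have := ((hasDerivAt_id ε).const_mul 2).mul_const z
      exact this.congr_deriv (by ring)
    exact (hasDerivAt_const ε x).prodMk ((hasDerivAt_const ε y).prodMk h3')
  have hdγ : Differentiable ℝ γ := hγ.differentiable (by simp)
  have hγ' : ContDiff ℝ (⊤ : ℕ∞) (fderiv ℝ γ) := hγ.fderiv_right (by simp)
  have hdγ' : Differentiable ℝ (fderiv ℝ γ) := hγ'.differentiable (by simp)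
  set f : ℝ → ℝ := fun ε => γ (c ε) - ε ^ 2 * Q with hfdef
  set f' : ℝ → ℝ := fun ε => fderiv ℝ γ (c ε) (x, y, 2 * ε * z) - 2 * ε * Q with hf'def
  set f'' : ℝ → ℝ := fun ε =>
    (fderiv ℝ (fderiv ℝ γ) (c ε) (x, y, 2 * ε * z)) (x, y, 2 * ε * z)
      + fderiv ℝ γ (c ε) (0, 0, 2 * z) - 2 * Q with hf''def
  have hd1 : ∀ t, HasDerivAt f (f' t) t := by
    intro t
    have hg : HasDerivAt (fun ε => γ (c ε)) (fderiv ℝ γ (c t) (x, y, 2 * t * z)) t :=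
      (hdγ (c t)).hasFDerivAt.comp_hasDerivAt t (hc t)
    have hp : HasDerivAt (fun ε : ℝ => ε ^ 2 * Q) (2 * t * Q) t := by
      have := (hasDerivAt_pow 2 t).mul_const Q
      exact this.congr_deriv (by push_cast; ring)
    exact hg.sub hp
  have hd2 : ∀ t, HasDerivAt f' (f'' t) t := by
    intro t
    have hA : HasDerivAt (fun ε => fderiv ℝ γ (c ε))
        (fderiv ℝ (fderiv ℝ γ) (c t) (x, y, 2 * t * z)) t :=
      (hdγ' (c t)).hasFDerivAt.comp_hasDerivAt t (hc t)
    have happ := hA.clm_apply (hu t)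
    have hp : HasDerivAt (fun ε : ℝ => 2 * ε * Q) (2 * Q) t := by
      have := ((hasDerivAt_id t).const_mul 2).mul_const Q
      exact this.congr_deriv (by ring)
    exact happ.sub hp
  have hcc : Continuous c := by
    apply Continuous.prodMk (by fun_prop)
    exact Continuous.prodMk (by fun_prop) (by fun_prop)
  have hcu : Continuous (fun ε : ℝ => ((x, y, 2 * ε * z) : ℝ × ℝ × ℝ)) := by
    apply Continuous.prodMk (by fun_prop)
    exact Continuous.prodMk (by fun_prop) (by fun_prop)
  have hc2 : Continuous f'' := by
    apply Continuous.sub _ continuous_const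
    apply Continuous.add
    · exact (((hγ'.continuous_fderiv (by simp)).comp hcc).clm_apply hcu).clm_apply hcu
    · exact ((hγ.continuous_fderiv (by simp)).comp hcc).clm_apply continuous_const
  have hdiff : DifferentiableAt ℝ f'' 0 := by
    have hdc : Differentiable ℝ c := fun t => (hc t).differentiableAt
    have hdu : Differentiable ℝ (fun ε : ℝ => ((x, y, 2 * ε * z) : ℝ × ℝ × ℝ)) :=
      fun t => (hu t).differentiableAt
    have hB : Differentiable ℝ (fderiv ℝ (fderiv ℝ γ)) :=
      (hγ'.fderiv_right (m := (⊤ : ℕ∞)) (by simp)).differentiable (by simp)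
    apply DifferentiableAt.sub _ (differentiableAt_const _)
    apply DifferentiableAt.add
    · exact (((hB (c 0)).comp 0 (hdc 0)).clm_apply (hdu 0)).clm_apply (hdu 0)
    · exact ((hdγ' (c 0)).comp 0 (hdc 0)).clm_apply (differentiableAt_const _)
  have h0f : f 0 = 0 := by simp [hfdef, hc0, h0]
  have e1 : ((x, y, 2 * (0:ℝ) * z) : ℝ × ℝ × ℝ) = (x, y, 0) := by norm_num
  have h1f : f' 0 = 0 := by
    simp [hf'def, hc0, e1, h1]
  have h2f : f'' 0 = 0 := by
    simp [hf''def, hc0, e1, h2, hz0]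
  exact cube_lemma hd1 hd2 hc2 hdiff h0f h1f h2f

lemma clm_decomp {F : Type*} [NormedAddCommGroup F] [NormedSpace ℝ F]
    (L : ℝ × ℝ × ℝ →L[ℝ] F) (a b c : ℝ) :
    L (a, b, c) = a • L (1, 0, 0) + b • L (0, 1, 0) + c • L (0, 0, 1) := by
  have h : ((a, b, c) : ℝ × ℝ × ℝ)
      = a • ((1, 0, 0) : ℝ × ℝ × ℝ) + b • (0, 1, 0) + c • (0, 0, 1) := by
    simp [Prod.ext_iff]
  rw [h, map_add, map_add, map_smul, map_smul, map_smul]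


/-- First assertion of Lemma 2.3: in normal coordinates the rescaled frame expands as
`X₁^ε = X̂₁ - ε² (y/2) γ^[2](x,y) ∂_z + O(ε³)` and
`X₂^ε = X̂₂ + ε² (x/2) γ^[2](x,y) ∂_z + O(ε³)` as `ε → 0⁺`, for each fixed point. -/
theorem stmt3 (β γ : ℝ × ℝ × ℝ → ℝ) (hβ : ContDiff ℝ (⊤ : ℕ∞) β) (hγ : ContDiff ℝ (⊤ : ℕ∞) γ)
    (hβ0 : ∀ z : ℝ, β (0, 0, z) = 0) (hγ0 : ∀ z : ℝ, γ (0, 0, z) = 0)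
    (hγx : ∀ z : ℝ, fderiv ℝ γ (0, 0, z) (1, 0, 0) = 0)
    (hγy : ∀ z : ℝ, fderiv ℝ γ (0, 0, z) (0, 1, 0) = 0)
    (X₁ X₂ : ℝ × ℝ × ℝ → ℝ × ℝ × ℝ)
    (hX₁ : ∀ p : ℝ × ℝ × ℝ,
      X₁ p = (1 + β p * p.2.1 ^ 2, -(β p * p.1 * p.2.1), -p.2.1 / 2 - γ p * p.2.1 / 2))
    (hX₂ : ∀ p : ℝ × ℝ × ℝ,
      X₂ p = (-(β p * p.1 * p.2.1), 1 + β p * p.1 ^ 2, p.1 / 2 + γ p * p.1 / 2))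
    (δ : ℝ → ℝ × ℝ × ℝ → ℝ × ℝ × ℝ)
    (hδ : ∀ ε : ℝ, ∀ p : ℝ × ℝ × ℝ, δ ε p = (ε * p.1, ε * p.2.1, ε ^ 2 * p.2.2))
    (X₁e X₂e : ℝ → ℝ × ℝ × ℝ → ℝ × ℝ × ℝ)
    (hX₁e : ∀ ε : ℝ, 0 < ε → ∀ p : ℝ × ℝ × ℝ, X₁e ε p = ε • δ (1 / ε) (X₁ (δ ε p)))
    (hX₂e : ∀ ε : ℝ, 0 < ε → ∀ p : ℝ × ℝ × ℝ, X₂e ε p = ε • δ (1 / ε) (X₂ (δ ε p)))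
    (q : ℝ → ℝ → ℝ)
    (hq : ∀ x y : ℝ, q x y =
      (1 / 2) * (fderiv ℝ (fun p => fderiv ℝ γ p (1, 0, 0)) 0 (1, 0, 0)) * x ^ 2
      + (fderiv ℝ (fun p => fderiv ℝ γ p (1, 0, 0)) 0 (0, 1, 0)) * x * y
      + (1 / 2) * (fderiv ℝ (fun p => fderiv ℝ γ p (0, 1, 0)) 0 (0, 1, 0)) * y ^ 2)
    (p : ℝ × ℝ × ℝ) :
    ((fun ε : ℝ => X₁e ε p -
        (1, 0, -p.2.1 / 2 - ε ^ 2 * (p.2.1 / 2) * q p.1 p.2.1))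
      =O[nhdsWithin 0 (Set.Ioi 0)] fun ε : ℝ => ε ^ 3) ∧
    ((fun ε : ℝ => X₂e ε p -
        (0, 1, p.1 / 2 + ε ^ 2 * (p.1 / 2) * q p.1 p.2.1))
      =O[nhdsWithin 0 (Set.Ioi 0)] fun ε : ℝ => ε ^ 3) := by
  obtain ⟨x, y, z⟩ := p
  have hdγ : Differentiable ℝ γ := hγ.differentiable (by simp)
  have hγ' : ContDiff ℝ (⊤ : ℕ∞) (fderiv ℝ γ) := hγ.fderiv_right (by simp)
  have hdγ' : Differentiable ℝ (fderiv ℝ γ) := hγ'.differentiable (by simp)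
  have e000 : ((0, 0, 0) : ℝ × ℝ × ℝ) = 0 := rfl
  have hγ00 : γ 0 = 0 := by rw [← e000]; exact hγ0 0
  -- z-derivative of γ vanishes on the z-axis
  have dz : ∀ w : ℝ, fderiv ℝ γ (0, 0, w) ((0, 0, 1) : ℝ × ℝ × ℝ) = 0 := by
    intro w
    have he : HasDerivAt (fun t : ℝ => γ (0, 0, t))
        (fderiv ℝ γ (0, 0, w) ((0, 0, 1) : ℝ × ℝ × ℝ)) w := by
      have hcurve : HasDerivAt (fun t : ℝ => ((0, 0, t) : ℝ × ℝ × ℝ))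
          ((0, 0, 1) : ℝ × ℝ × ℝ) w :=
        (hasDerivAt_const w (0:ℝ)).prodMk ((hasDerivAt_const w (0:ℝ)).prodMk (hasDerivAt_id w))
      exact (hdγ _).hasFDerivAt.comp_hasDerivAt w hcurve
    have hconst : HasDerivAt (fun t : ℝ => γ (0, 0, t)) 0 w := by
      have : (fun t : ℝ => γ (0, 0, t)) = fun _ => 0 := funext hγ0
      rw [this]; exact hasDerivAt_const w 0
    exact he.unique hconst
  have hγx0 : fderiv ℝ γ 0 ((1, 0, 0) : ℝ × ℝ × ℝ) = 0 := by rw [← e000]; exact hγx 0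
  have hγy0 : fderiv ℝ γ 0 ((0, 1, 0) : ℝ × ℝ × ℝ) = 0 := by rw [← e000]; exact hγy 0
  have hγz0 : fderiv ℝ γ 0 ((0, 0, 1) : ℝ × ℝ × ℝ) = 0 := by rw [← e000]; exact dz 0
  have h1 : fderiv ℝ γ 0 ((x, y, 0) : ℝ × ℝ × ℝ) = 0 := by
    rw [clm_decomp, hγx0, hγy0, hγz0]; simp
  have hz0 : fderiv ℝ γ 0 ((0, 0, 2 * z) : ℝ × ℝ × ℝ) = 0 := by
    rw [clm_decomp, hγx0, hγy0, hγz0]; simp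
  -- second derivative evaluation
  have hBv : ∀ v w : ℝ × ℝ × ℝ,
      fderiv ℝ (fun p => fderiv ℝ γ p v) 0 w = (fderiv ℝ (fderiv ℝ γ) 0 w) v := by
    intro v w
    rw [fderiv_clm_apply (hdγ'.differentiableAt) (differentiableAt_const v)]
    simp
  set B := fderiv ℝ (fderiv ℝ γ) 0 with hB
  have hsymm : B (1, 0, 0) (0, 1, 0) = B (0, 1, 0) (1, 0, 0) :=
    second_derivative_symmetric (fun p => (hdγ p).hasFDerivAt) (hdγ' 0).hasFDerivAt _ _
  have h2 : (B ((x, y, 0) : ℝ × ℝ × ℝ)) ((x, y, 0) : ℝ × ℝ × ℝ) = 2 * q x y := by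
    rw [hq x y, hBv, hBv, hBv]
    rw [clm_decomp B x y 0]
    simp only [ContinuousLinearMap.add_apply, ContinuousLinearMap.smul_apply,
      smul_eq_mul, zero_smul, add_zero, zero_mul]
    rw [clm_decomp (B (1,0,0)) x y 0, clm_decomp (B (0,1,0)) x y 0]
    simp only [smul_eq_mul]
    rw [hsymm]
    ring
  -- the two scalar big-O facts
  have Gbig : (fun ε : ℝ => γ (ε * x, ε * y, ε ^ 2 * z) - ε ^ 2 * q x y)
      =O[nhds 0] fun ε => ε ^ 3 := gamma_big hγ x y z (q x y) hγ00 h1 hz0 h2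
  have hβ00 : β 0 = 0 := by rw [← e000]; exact hβ0 0
  have Bbig : (fun ε : ℝ => β (ε * x, ε * y, ε ^ 2 * z)) =O[nhds 0] fun ε => ε ^ 1 := by
    have hcurve : HasDerivAt (fun ε : ℝ => ((ε * x, ε * y, ε ^ 2 * z) : ℝ × ℝ × ℝ))
        ((x, y, 2 * 0 * z) : ℝ × ℝ × ℝ) 0 := by
      have h3' : HasDerivAt (fun ε : ℝ => ε ^ 2 * z) (2 * 0 * z) 0 := by
        have := (hasDerivAt_pow 2 (0:ℝ)).mul_const z
        exact this.congr_deriv (by push_cast; ring)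
      exact (hasDerivAt_mul_const x).prodMk ((hasDerivAt_mul_const y).prodMk h3')
    have hb : HasDerivAt (fun ε : ℝ => β (ε * x, ε * y, ε ^ 2 * z))
        (fderiv ℝ β ((0 * x, 0 * y, 0 ^ 2 * z) : ℝ × ℝ × ℝ) ((x, y, 2 * 0 * z) : ℝ × ℝ × ℝ)) 0 :=
      ((hβ.differentiable (by simp)) _).hasFDerivAt.comp_hasDerivAt 0 hcurve
    have := hb.hasFDerivAt.isBigO_sub
    simp only [sub_zero] at this
    simpa [hβ00, hβ0] using this
  -- transfer to the one-sided filter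
  have Gb : (fun ε : ℝ => γ (ε * x, ε * y, ε ^ 2 * z) - ε ^ 2 * q x y)
      =O[nhdsWithin 0 (Set.Ioi 0)] fun ε => ε ^ 3 := Gbig.mono nhdsWithin_le_nhds
  have Bb : (fun ε : ℝ => β (ε * x, ε * y, ε ^ 2 * z))
      =O[nhdsWithin 0 (Set.Ioi 0)] fun ε => ε ^ 1 := Bbig.mono nhdsWithin_le_nhds
  have Eb : (fun ε : ℝ => ε ^ 2) =O[nhdsWithin 0 (Set.Ioi 0)] fun ε : ℝ => ε ^ 2 :=
    isBigO_refl _ _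
  have Pb : (fun ε : ℝ => ε ^ 2 * β (ε * x, ε * y, ε ^ 2 * z))
      =O[nhdsWithin 0 (Set.Ioi 0)] fun ε => ε ^ 3 := by
    have := Eb.mul Bb
    have he : (fun ε : ℝ => ε ^ 2 * ε ^ 1) = fun ε : ℝ => ε ^ 3 := by
      funext ε; ring
    rwa [he] at this
  constructor
  · have O1 : (fun ε : ℝ => y ^ 2 * (ε ^ 2 * β (ε * x, ε * y, ε ^ 2 * z)))
        =O[nhdsWithin 0 (Set.Ioi 0)] fun ε => ε ^ 3 := Pb.const_mul_left _
    have O2 : (fun ε : ℝ => -(x * y * (ε ^ 2 * β (ε * x, ε * y, ε ^ 2 * z))))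
        =O[nhdsWithin 0 (Set.Ioi 0)] fun ε => ε ^ 3 := (Pb.const_mul_left _).neg_left
    have O3 : (fun ε : ℝ => -(y / 2) * (γ (ε * x, ε * y, ε ^ 2 * z) - ε ^ 2 * q x y))
        =O[nhdsWithin 0 (Set.Ioi 0)] fun ε => ε ^ 3 := Gb.const_mul_left _
    have Otup := O1.prod_left (O2.prod_left O3)
    refine Otup.congr' (eventually_nhdsWithin_of_forall fun ε hε => ?_) EventuallyEq.rfl
    have hε0 : (0:ℝ) < ε := hε
    have hne : ε ≠ 0 := ne_of_gt hε0
    simp only [hX₁e ε hε0, hδ, hX₁, Prod.smul_mk, smul_eq_mul, Prod.mk_sub_mk, Prod.mk.injEq]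
    refine ⟨?_, ?_, ?_⟩ <;> (field_simp; ring)
  · have O1 : (fun ε : ℝ => -(x * y * (ε ^ 2 * β (ε * x, ε * y, ε ^ 2 * z))))
        =O[nhdsWithin 0 (Set.Ioi 0)] fun ε => ε ^ 3 := (Pb.const_mul_left _).neg_left
    have O2 : (fun ε : ℝ => x ^ 2 * (ε ^ 2 * β (ε * x, ε * y, ε ^ 2 * z)))
        =O[nhdsWithin 0 (Set.Ioi 0)] fun ε => ε ^ 3 := Pb.const_mul_left _
    have O3 : (fun ε : ℝ => (x / 2) * (γ (ε * x, ε * y, ε ^ 2 * z) - ε ^ 2 * q x y))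
        =O[nhdsWithin 0 (Set.Ioi 0)] fun ε => ε ^ 3 := Gb.const_mul_left _
    have Otup := O1.prod_left (O2.prod_left O3)
    refine Otup.congr' (eventually_nhdsWithin_of_forall fun ε hε => ?_) EventuallyEq.rfl
    have hε0 : (0:ℝ) < ε := hε
    have hne : ε ≠ 0 := ne_of_gt hε0
    simp only [hX₂e ε hε0, hδ, hX₂, Prod.smul_mk, smul_eq_mul, Prod.mk_sub_mk, Prod.mk.injEq]
    refine ⟨?_, ?_, ?_⟩ <;> (field_simp; ring)
end

section
/- Define E : ℝ × ℝ × (ℝ \ {0}) → ℝ³ by E(ρ, θ, w) = (ρ(sin(w+θ) − sin θ)/w, −ρ(cos(w+θ) − cos θ)/w, ρ²(w − sin w)/(2w²)). Then at every point (ρ, θ, w) with w ≠ 0, E is differentiable and the determinant of its Jacobian matrix (the 3×3 matrix of partial derivatives with respect to ρ, θ, w) equals ρ³(2 − 2cos w − w sin w)/w⁴. -/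
/-!
Near a point with `w ≠ 0` the map is given by the smooth closed formula `heisenbergExp`, so its
Jacobian columns are the three partial derivatives of that formula. Writing
`A = sin (w + θ) - sin θ` and `B = cos (w + θ) - cos θ`, expanding the determinant along its last
row leaves only `A ^ 2 + B ^ 2 = 2 - 2 cos w` and `B sin (w + θ) - A cos (w + θ) = - sin w`.
-/

open Real Filter Topology

noncomputable def heisenbergExp (p : ℝ × ℝ × ℝ) : ℝ × ℝ × ℝ :=
  (p.1 * (sin (p.2.2 + p.2.1) - sin p.2.1) / p.2.2,
   -(p.1 * (cos (p.2.2 + p.2.1) - cos p.2.1)) / p.2.2,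
   p.1 ^ 2 * (p.2.2 - sin p.2.2) / (2 * p.2.2 ^ 2))

section CoordinateSlices

variable {F : Type*} [NormedAddCommGroup F] [NormedSpace ℝ F] {f : ℝ × ℝ × ℝ → F} {a b c : ℝ}

theorem fderiv_apply_one_zero_zero (hf : DifferentiableAt ℝ f (a, b, c)) :
    fderiv ℝ f (a, b, c) (1, 0, 0) = deriv (fun t ↦ f (t, b, c)) a :=
  (hf.hasFDerivAt.comp_hasDerivAt a
    ((hasDerivAt_id a).prodMk ((hasDerivAt_const a b).prodMk (hasDerivAt_const a c)))).deriv.symm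

theorem fderiv_apply_zero_one_zero (hf : DifferentiableAt ℝ f (a, b, c)) :
    fderiv ℝ f (a, b, c) (0, 1, 0) = deriv (fun t ↦ f (a, t, c)) b :=
  (hf.hasFDerivAt.comp_hasDerivAt b
    ((hasDerivAt_const b a).prodMk ((hasDerivAt_id b).prodMk (hasDerivAt_const b c)))).deriv.symm

theorem fderiv_apply_zero_zero_one (hf : DifferentiableAt ℝ f (a, b, c)) :
    fderiv ℝ f (a, b, c) (0, 0, 1) = deriv (fun t ↦ f (a, b, t)) c :=
  (hf.hasFDerivAt.comp_hasDerivAt c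
    ((hasDerivAt_const c a).prodMk ((hasDerivAt_const c b).prodMk (hasDerivAt_id c)))).deriv.symm

end CoordinateSlices

theorem differentiableAt_heisenbergExp {p : ℝ × ℝ × ℝ} (hw : p.2.2 ≠ 0) :
    DifferentiableAt ℝ heisenbergExp p := by
  unfold heisenbergExp
  fun_prop (disch := positivity)

section Jacobian

variable {ρ θ w : ℝ}

theorem hasDerivAt_heisenbergExp_rho :
    HasDerivAt (fun t ↦ heisenbergExp (t, θ, w))
      ((sin (w + θ) - sin θ) / w, -(cos (w + θ) - cos θ) / w, ρ * (w - sin w) / w ^ 2) ρ := by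
  refine (((hasDerivAt_id ρ).mul_const (sin (w + θ) - sin θ)).div_const w |>.prodMk <|
    ((hasDerivAt_id ρ).mul_const (cos (w + θ) - cos θ)).neg.div_const w |>.prodMk <|
      ((hasDerivAt_pow 2 ρ).mul_const (w - sin w)).div_const (2 * w ^ 2)).congr_deriv ?_
  ext <;> simp only [one_mul, neg_sub, Nat.cast_ofNat, Nat.add_one_sub_one, pow_one]
  field_simp

theorem hasDerivAt_heisenbergExp_theta :
    HasDerivAt (fun t ↦ heisenbergExp (ρ, t, w))
      (ρ * (cos (w + θ) - cos θ) / w, ρ * (sin (w + θ) - sin θ) / w, 0) θ := by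
  have hs := ((((hasDerivAt_id θ).const_add w).sin.sub (hasDerivAt_id θ).sin).const_mul ρ).div_const w
  have hc :=
    ((((hasDerivAt_id θ).const_add w).cos.sub (hasDerivAt_id θ).cos).const_mul ρ).neg.div_const w
  refine (hs.prodMk <| hc.prodMk <|
    hasDerivAt_const θ (ρ ^ 2 * (w - sin w) / (2 * w ^ 2))).congr_deriv ?_
  ext <;> simp only [id_eq, mul_one, sub_neg_eq_add]
  ring

theorem hasDerivAt_heisenbergExp_w (hw : w ≠ 0) :
    HasDerivAt (fun t ↦ heisenbergExp (ρ, θ, t))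
      (ρ * (w * cos (w + θ) - (sin (w + θ) - sin θ)) / w ^ 2,
       ρ * (w * sin (w + θ) + (cos (w + θ) - cos θ)) / w ^ 2,
       ρ ^ 2 * (2 * sin w - w - w * cos w) / (2 * w ^ 3)) w := by
  have hs := ((((hasDerivAt_id w).add_const θ).sin.sub_const (sin θ)).const_mul ρ).div
    (hasDerivAt_id w) hw
  have hc := ((((hasDerivAt_id w).add_const θ).cos.sub_const (cos θ)).const_mul ρ).neg.div
    (hasDerivAt_id w) hw
  have hz := (((hasDerivAt_id w).sub (hasDerivAt_id w).sin).const_mul (ρ ^ 2)).div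
    ((hasDerivAt_pow 2 w).const_mul 2) (by positivity)
  refine (hs.prodMk (hc.prodMk hz)).congr_deriv ?_
  ext
  · simp only [id_eq, mul_one]
    field_simp
  · simp only [id_eq, mul_one, mul_neg, neg_neg, Pi.neg_apply, sub_neg_eq_add]
    field_simp
  · simp only [id_eq, mul_one, Pi.sub_apply, Nat.cast_ofNat, Nat.add_one_sub_one, pow_one]
    field_simp
    ring

theorem heisenbergExp_jacobian_det (hw : w ≠ 0) :
    !![(sin (w + θ) - sin θ) / w, ρ * (cos (w + θ) - cos θ) / w,
        ρ * (w * cos (w + θ) - (sin (w + θ) - sin θ)) / w ^ 2;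
      -(cos (w + θ) - cos θ) / w, ρ * (sin (w + θ) - sin θ) / w,
        ρ * (w * sin (w + θ) + (cos (w + θ) - cos θ)) / w ^ 2;
      ρ * (w - sin w) / w ^ 2, 0, ρ ^ 2 * (2 * sin w - w - w * cos w) / (2 * w ^ 3)].det
      = ρ ^ 3 * (2 - 2 * cos w - w * sin w) / w ^ 4 := by
  have hsq : (sin (w + θ) - sin θ) ^ 2 + (cos (w + θ) - cos θ) ^ 2 = 2 - 2 * cos w := by
    have h := cos_sub (w + θ) θ
    rw [add_sub_cancel_right] at h
    linear_combination sin_sq_add_cos_sq (w + θ) + sin_sq_add_cos_sq θ + 2 * h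
  have hcross : (cos (w + θ) - cos θ) * sin (w + θ) - (sin (w + θ) - sin θ) * cos (w + θ)
      = -sin w := by
    have h := sin_sub (w + θ) θ
    rw [add_sub_cancel_right] at h
    linear_combination h
  generalize sin (w + θ) - sin θ = A at *
  generalize cos (w + θ) - cos θ = B at *
  simp only [Matrix.det_fin_three, Matrix.of_apply, Matrix.cons_val', Matrix.cons_val_zero,
    Matrix.cons_val_fin_one, Matrix.cons_val_one, Matrix.cons_val, mul_zero, sub_zero, add_zero]
  field_simp
  linear_combination ρ ^ 3 * (w - w * cos w) * hsq + 2 * ρ ^ 3 * w * (w - sin w) * hcross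
    + 2 * ρ ^ 3 * w * sin_sq_add_cos_sq w

end Jacobian

/-- The Jacobian determinant of the Heisenberg exponential map in cylindrical coordinates:
`det(J exp⁰ₚ)(ρ,θ,w) = ρ³(2 - 2cos w - w sin w)/w⁴` (equation (2.17) of the paper). -/
theorem stmt5 (E : ℝ × ℝ × ℝ → ℝ × ℝ × ℝ)
    (hE : ∀ ρ θ w : ℝ, w ≠ 0 → E (ρ, θ, w) =
      (ρ * (sin (w + θ) - sin θ) / w,
       -(ρ * (cos (w + θ) - cos θ)) / w,
       ρ ^ 2 * (w - sin w) / (2 * w ^ 2)))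
    (ρ θ w : ℝ) (hw : w ≠ 0) :
    DifferentiableAt ℝ E (ρ, θ, w) ∧
    (Matrix.of
      ![![(fderiv ℝ E (ρ, θ, w) (1, 0, 0)).1,
          (fderiv ℝ E (ρ, θ, w) (0, 1, 0)).1,
          (fderiv ℝ E (ρ, θ, w) (0, 0, 1)).1],
        ![(fderiv ℝ E (ρ, θ, w) (1, 0, 0)).2.1,
          (fderiv ℝ E (ρ, θ, w) (0, 1, 0)).2.1,
          (fderiv ℝ E (ρ, θ, w) (0, 0, 1)).2.1],
        ![(fderiv ℝ E (ρ, θ, w) (1, 0, 0)).2.2,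
          (fderiv ℝ E (ρ, θ, w) (0, 1, 0)).2.2,
          (fderiv ℝ E (ρ, θ, w) (0, 0, 1)).2.2]]).det
      = ρ ^ 3 * (2 - 2 * cos w - w * sin w) / w ^ 4 := by
  have hEq : E =ᶠ[𝓝 (ρ, θ, w)] heisenbergExp :=
    (continuous_snd.snd.continuousAt.eventually_ne hw).mono fun p hp ↦ hE p.1 p.2.1 p.2.2 hp
  have hdiff : DifferentiableAt ℝ heisenbergExp (ρ, θ, w) := differentiableAt_heisenbergExp hw
  refine ⟨hdiff.congr_of_eventuallyEq hEq, ?_⟩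
  rw [hEq.fderiv_eq, fderiv_apply_one_zero_zero hdiff, fderiv_apply_zero_one_zero hdiff,
    fderiv_apply_zero_zero_one hdiff, hasDerivAt_heisenbergExp_rho.deriv,
    hasDerivAt_heisenbergExp_theta.deriv, (hasDerivAt_heisenbergExp_w hw).deriv]
  exact heisenbergExp_jacobian_det hw
end

section
/- It holds that ∫₀¹ ∫₀^{2π} ∫_{−2π}^{2π} ρ³ (2 − 2cos w − w sin w)/w⁴ dw dθ dρ = (1/12)(1 + 2π·Si(2π)), where Si(2π) = ∫₀^{2π} (sin t)/t dt. (The integrand, a function of (ρ, θ, w), has a removable singularity at w = 0 with limiting value ρ³/12.) -/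
/-!
On `w ≠ 0` the `w`-integrand `(2 - 2 cos w - w sin w) / w⁴` is the derivative of
`F w = (4 (cos w - 1) + w sin w + w² cos w) / (6 w³) + Si w / 6`. The Taylor bounds for `cos` and
`sin` make both numerators `O(w⁴)`, so the integrand is bounded and `F w = O(w)` at `0`; hence
`∫₀^{2π} = F (2π) = 1 / (12π) + Si(2π) / 6`. Evenness doubles this on `[-2π, 2π]`, and the
`θ`- and `ρ`-integrals contribute the factors `2π` and `1/4`.
-/

open Real MeasureTheory intervalIntegral Filter Topology

noncomputable def heisenbergJacobian (w : ℝ) : ℝ := (2 - 2 * cos w - w * sin w) / w ^ 4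

noncomputable def heisenbergJacobianPrimitive (w : ℝ) : ℝ :=
  (4 * (cos w - 1) + w * sin w + w ^ 2 * cos w) / (6 * w ^ 3)
    + (1 / 6) * ∫ t in (0 : ℝ)..w, sin t / t

lemma integral_symmetric_eq_two_mul_of_even {f : ℝ → ℝ} {a : ℝ} (heven : ∀ x, f (-x) = f x)
    (hf : IntervalIntegrable f volume 0 a) :
    ∫ x in -a..a, f x = 2 * ∫ x in 0..a, f x := by
  have hf' : IntervalIntegrable f volume (-a) 0 := by
    simpa [heven] using ((IntervalIntegrable.iff_comp_neg).mp hf).symm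
  have hneg : ∫ x in -a..0, f x = ∫ x in 0..a, f x := by
    simpa [heven] using (integral_comp_neg (a := 0) (b := a) f).symm
  rw [← integral_add_adjacent_intervals hf' hf, hneg, two_mul]

lemma abs_sin_div_self_le_one (t : ℝ) : |sin t / t| ≤ 1 := by
  rw [abs_div]
  exact div_le_one_of_le₀ abs_sin_le_abs (abs_nonneg t)

lemma intervalIntegrable_sin_div_self (a b : ℝ) :
    IntervalIntegrable (fun t => sin t / t) volume a b :=
  intervalIntegrable_const.mono_fun' (measurable_sin.div measurable_id).aestronglyMeasurable
    (.of_forall abs_sin_div_self_le_one)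

lemma abs_integral_sin_div_self_le (w : ℝ) : |∫ t in (0 : ℝ)..w, sin t / t| ≤ |w| := by
  simpa using norm_integral_le_of_norm_le_const (a := 0) (b := w) (f := fun t => sin t / t)
    (C := 1) fun t _ => abs_sin_div_self_le_one t

lemma abs_two_sub_two_mul_cos_sub_mul_sin_le {w : ℝ} (hw : |w| ≤ 1) :
    |2 - 2 * cos w - w * sin w| ≤ |w| ^ 4 := by
  -- the left side is `|-2 (cos w - (1 - w²/2)) - w (sin w - (w - w³/6)) + w⁴/6|`
  have hc := abs_le.mp (cos_bound hw)
  have hs := abs_le.mp (sin_bound hw)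
  have h54 : |w| ^ 5 ≤ |w| ^ 4 := pow_le_pow_of_le_one (abs_nonneg w) hw (by norm_num)
  have hw4 : |w| ^ 4 = w ^ 4 := by rw [pow_abs]; exact abs_of_nonneg (by positivity)
  rw [abs_le]
  constructor <;> nlinarith [abs_nonneg w, abs_mul_abs_self w, le_abs_self w, neg_abs_le w]

lemma abs_four_mul_cos_sub_one_add_mul_sin_add_sq_mul_cos_le {w : ℝ} (hw : |w| ≤ 1) :
    |4 * (cos w - 1) + w * sin w + w ^ 2 * cos w| ≤ |w| ^ 4 := by
  -- the left side is `|(4 + w²) (cos w - (1 - w²/2)) + w (sin w - (w - w³/6)) - 2w⁴/3|`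
  have hc := abs_le.mp (cos_bound hw)
  have hs := abs_le.mp (sin_bound hw)
  have h54 : |w| ^ 5 ≤ |w| ^ 4 := pow_le_pow_of_le_one (abs_nonneg w) hw (by norm_num)
  have hw4 : |w| ^ 4 = w ^ 4 := by rw [pow_abs]; exact abs_of_nonneg (by positivity)
  rw [abs_le]
  constructor <;> nlinarith [abs_nonneg w, abs_mul_abs_self w, le_abs_self w, neg_abs_le w]

lemma abs_heisenbergJacobian_le (w : ℝ) : |heisenbergJacobian w| ≤ 5 := by
  rcases eq_or_ne w 0 with rfl | hw0
  · simp [heisenbergJacobian]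
  have hw4 : 0 < |w| ^ 4 := by positivity
  rw [heisenbergJacobian, abs_div, ← pow_abs, div_le_iff₀ hw4]
  rcases le_or_gt |w| 1 with hw | hw
  · linarith [abs_two_sub_two_mul_cos_sub_mul_sin_le hw]
  · have hsin : |w * sin w| ≤ |w| := by
      rw [abs_mul]; exact mul_le_of_le_one_right (abs_nonneg w) (abs_sin_le_one w)
    have hnum : |2 - 2 * cos w - w * sin w| ≤ 4 + |w| := by
      rw [abs_le] at hsin ⊢
      constructor <;> linarith [neg_one_le_cos w, cos_le_one w]
    have : |w| ≤ |w| ^ 4 := le_self_pow₀ hw.le (by norm_num)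
    linarith [one_le_pow₀ (n := 4) hw.le]

lemma intervalIntegrable_heisenbergJacobian (a b : ℝ) :
    IntervalIntegrable heisenbergJacobian volume a b :=
  intervalIntegrable_const.mono_fun'
    (by unfold heisenbergJacobian; fun_prop : Measurable _).aestronglyMeasurable
    (.of_forall abs_heisenbergJacobian_le)

lemma heisenbergJacobian_neg (w : ℝ) : heisenbergJacobian (-w) = heisenbergJacobian w := by
  simp [heisenbergJacobian, Even.neg_pow ⟨2, rfl⟩]

lemma hasDerivAt_heisenbergJacobianPrimitive {w : ℝ} (hw : w ≠ 0) :
    HasDerivAt heisenbergJacobianPrimitive (heisenbergJacobian w) w := by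
  have hSi : HasDerivAt (fun u => ∫ t in (0 : ℝ)..u, sin t / t) (sin w / w) w :=
    integral_hasDerivAt_right (intervalIntegrable_sin_div_self 0 w)
      (measurable_sin.div measurable_id).aestronglyMeasurable.stronglyMeasurableAtFilter
      (continuous_sin.continuousAt.div continuousAt_id hw)
  have hnum := ((((hasDerivAt_cos w).sub_const 1).const_mul 4).add
    ((hasDerivAt_id' w).mul (hasDerivAt_sin w))).add ((hasDerivAt_pow 2 w).mul (hasDerivAt_cos w))
  have hden := (hasDerivAt_pow 3 w).const_mul (6 : ℝ)
  refine ((hnum.div hden (by positivity)).add (hSi.const_mul (1 / 6 : ℝ))).congr_deriv ?_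
  simp only [Pi.add_apply, Pi.mul_apply, heisenbergJacobian]
  field_simp
  ring

lemma abs_heisenbergJacobianPrimitive_le {w : ℝ} (hw : |w| ≤ 1) :
    |heisenbergJacobianPrimitive w| ≤ |w| / 3 := by
  rcases eq_or_ne w 0 with rfl | hw0
  · simp [heisenbergJacobianPrimitive]
  have hrat : |(4 * (cos w - 1) + w * sin w + w ^ 2 * cos w) / (6 * w ^ 3)| ≤ |w| / 6 := by
    rw [abs_div, abs_mul, abs_pow, div_le_iff₀ (by positivity)]
    calc _ ≤ |w| ^ 4 := abs_four_mul_cos_sub_one_add_mul_sin_add_sq_mul_cos_le hw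
      _ = |w| / 6 * (|6| * |w| ^ 3) := by rw [abs_of_pos (by norm_num : (0 : ℝ) < 6)]; ring
  have hSi := abs_integral_sin_div_self_le w
  calc |heisenbergJacobianPrimitive w|
      ≤ |(4 * (cos w - 1) + w * sin w + w ^ 2 * cos w) / (6 * w ^ 3)|
        + |(1 / 6 : ℝ) * ∫ t in (0 : ℝ)..w, sin t / t| := abs_add_le _ _
    _ ≤ |w| / 6 + 1 / 6 * |w| := by
        rw [abs_mul, abs_of_pos (by norm_num : (0 : ℝ) < 1 / 6)]; gcongr
    _ = |w| / 3 := by ring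

lemma tendsto_heisenbergJacobianPrimitive_zero :
    Tendsto heisenbergJacobianPrimitive (𝓝 0) (𝓝 0) := by
  have hbound : ∀ᶠ w in 𝓝 (0 : ℝ), ‖heisenbergJacobianPrimitive w‖ ≤ |w| / 3 := by
    filter_upwards [Metric.closedBall_mem_nhds (0 : ℝ) one_pos] with w hw
    exact abs_heisenbergJacobianPrimitive_le (by simpa using hw)
  refine squeeze_zero_norm' hbound ?_
  simpa using (continuous_abs.div_const (3 : ℝ)).tendsto 0

lemma integral_heisenbergJacobian_of_pos {a : ℝ} (ha : 0 < a) :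
    ∫ w in (0 : ℝ)..a, heisenbergJacobian w = heisenbergJacobianPrimitive a := by
  rw [integral_eq_sub_of_hasDerivAt_of_tendsto ha
    (fun w hw => hasDerivAt_heisenbergJacobianPrimitive hw.1.ne')
    (intervalIntegrable_heisenbergJacobian 0 a)
    (tendsto_heisenbergJacobianPrimitive_zero.mono_left nhdsWithin_le_nhds)
    ((hasDerivAt_heisenbergJacobianPrimitive ha.ne').continuousAt.tendsto.mono_left
      nhdsWithin_le_nhds), sub_zero]

lemma heisenbergJacobianPrimitive_two_pi :
    heisenbergJacobianPrimitive (2 * π)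
      = 1 / (12 * π) + 1 / 6 * ∫ t in (0 : ℝ)..(2 * π), sin t / t := by
  rw [heisenbergJacobianPrimitive, cos_two_pi, sin_two_pi]
  field_simp
  ring

/-- The Popp volume of the unit ball in the Heisenberg group:
`∫₀¹∫₀^{2π}∫_{-2π}^{2π} ρ³(2 - 2cos w - w sin w)/w⁴ dw dθ dρ = (1/12)(1 + 2π Si(2π))`.
(The integrand has a removable singularity at `w = 0`, a set of measure zero.) -/
theorem stmt7 :
    (∫ ρ in (0:ℝ)..1, ∫ θ in (0:ℝ)..(2 * π), ∫ w in (-(2 * π))..(2 * π),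
        ρ ^ 3 * (2 - 2 * cos w - w * sin w) / w ^ 4)
      = (1 / 12) * (1 + 2 * π * ∫ t in (0:ℝ)..(2 * π), sin t / t) := by
  have hinner : ∀ ρ : ℝ, ∫ w in (-(2 * π))..(2 * π), ρ ^ 3 * (2 - 2 * cos w - w * sin w) / w ^ 4
      = ρ ^ 3 * (2 * heisenbergJacobianPrimitive (2 * π)) := fun ρ => by
    simp_rw [mul_div_assoc, intervalIntegral.integral_const_mul]
    change ρ ^ 3 * ∫ w in (-(2 * π))..(2 * π), heisenbergJacobian w = _
    rw [integral_symmetric_eq_two_mul_of_even heisenbergJacobian_neg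
        (intervalIntegrable_heisenbergJacobian 0 _),
      integral_heisenbergJacobian_of_pos two_pi_pos]
  simp_rw [hinner, intervalIntegral.integral_const, smul_eq_mul,
    intervalIntegral.integral_const_mul, intervalIntegral.integral_mul_const, integral_pow,
    heisenbergJacobianPrimitive_two_pi]
  field_simp
  ring
end

section
/- It holds that ∫_{−2π}^{2π} (π/2)·(5w sin w − (w² − 8)cos w − 8)/w⁶ dw = (1/160)(1/π² − 2 − 4π·Si(2π)), where Si(2π) = ∫₀^{2π} (sin t)/t dt. (The integrand has a removable singularity at w = 0.) -/
/-!
Five integrations by parts show that, away from `0`, the integrand is the derivative of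
`F w = (π / 2) N(w) / w⁵ - (π / 80) Si(w)` with `N = primitiveNum`. Sixth-order Taylor bounds for
`sin` and `cos` make both the numerator of the integrand and `N` of size `O(w⁶)` at `0`, so the
integrand is bounded, hence integrable, and `F` is continuous through `0`. The fundamental theorem
of calculus with the exceptional point `0` then gives `F(2π) - F(-2π)`, which is evaluated using
that `N` is even and `Si` is odd.
-/

open Real

open Finset Complex in
lemma taylor_six_exp_ofReal_mul_I (x : ℝ) :
    ∑ m ∈ range 6, ((x : ℂ) * I) ^ m / m.factorial =
      ((1 - x ^ 2 / 2 + x ^ 4 / 24 : ℝ) : ℂ) + ((x - x ^ 3 / 6 + x ^ 5 / 120 : ℝ) : ℂ) * I := by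
  simp only [sum_range_succ, range_zero, sum_empty, Nat.factorial]
  push_cast
  linear_combination
    (x ^ 2 / 2 + x ^ 3 / 6 * I + x ^ 4 / 24 * (I ^ 2 - 1) + x ^ 5 / 120 * I * (I ^ 2 - 1)) * I_sq

open Complex in
lemma norm_exp_ofReal_mul_I_sub_taylor_six_le {x : ℝ} (hx : |x| ≤ 1) :
    ‖exp (x * I) - (((1 - x ^ 2 / 2 + x ^ 4 / 24 : ℝ) : ℂ) +
      ((x - x ^ 3 / 6 + x ^ 5 / 120 : ℝ) : ℂ) * I)‖ ≤ |x| ^ 6 * (7 / 4320) := by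
  rw [← taylor_six_exp_ofReal_mul_I]
  calc _ ≤ ‖(x : ℂ) * I‖ ^ 6 * ((Nat.succ 6 : ℝ) * (Nat.factorial 6 * 6 : ℝ)⁻¹) :=
        exp_bound (by simpa) (by norm_num)
    _ = |x| ^ 6 * (7 / 4320) := by norm_num [Nat.factorial]

open Complex in
lemma abs_cos_sub_taylor_six_le {x : ℝ} (hx : |x| ≤ 1) :
    |Real.cos x - (1 - x ^ 2 / 2 + x ^ 4 / 24)| ≤ |x| ^ 6 * (7 / 4320) := by
  simpa only [sub_re, add_re, exp_ofReal_mul_I_re, ofReal_re, mul_I_re, ofReal_im, neg_zero,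
    add_zero] using (abs_re_le_norm _).trans (norm_exp_ofReal_mul_I_sub_taylor_six_le hx)

open Complex in
lemma abs_sin_sub_taylor_six_le {x : ℝ} (hx : |x| ≤ 1) :
    |Real.sin x - (x - x ^ 3 / 6 + x ^ 5 / 120)| ≤ |x| ^ 6 * (7 / 4320) := by
  simpa only [sub_im, add_im, exp_ofReal_mul_I_im, ofReal_im, mul_I_im, ofReal_re, zero_add]
    using (abs_im_le_norm _).trans (norm_exp_ofReal_mul_I_sub_taylor_six_le hx)

open MeasureTheory

noncomputable section

namespace SecondOrderCoefficient

def integrandNum (w : ℝ) : ℝ := 5 * w * sin w - (w ^ 2 - 8) * cos w - 8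

def primitiveNum (w : ℝ) : ℝ :=
  8 / 5 - (w ^ 3 / 40 + 17 * w / 20) * sin w - (w ^ 4 / 40 - w ^ 2 / 20 + 8 / 5) * cos w

def primitive (w : ℝ) : ℝ :=
  π / 2 * (primitiveNum w / w ^ 5) - π / 80 * ∫ t in (0 : ℝ)..w, sinc t

lemma abs_integrandNum_le_of_abs_le_one {w : ℝ} (hw : |w| ≤ 1) :
    |integrandNum w| ≤ |w| ^ 6 := by
  set s := sin w - (w - w ^ 3 / 6 + w ^ 5 / 120)
  set c := cos w - (1 - w ^ 2 / 2 + w ^ 4 / 24)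
  have hs : |s| ≤ |w| ^ 6 * (7 / 4320) := abs_sin_sub_taylor_six_le hw
  have hc : |c| ≤ |w| ^ 6 * (7 / 4320) := abs_cos_sub_taylor_six_le hw
  obtain ⟨hw₁, hw₂⟩ := abs_le.mp hw
  have h5 : |5 * w| ≤ 5 := by rw [abs_mul]; norm_num [hw]
  have h8 : |8 - w ^ 2| ≤ 8 := abs_le.mpr ⟨by nlinarith, by nlinarith⟩
  calc |integrandNum w| = |5 * w * s + (8 - w ^ 2) * c| := by
        unfold integrandNum s c; ring_nf
    _ ≤ 5 * (|w| ^ 6 * (7 / 4320)) + 8 * (|w| ^ 6 * (7 / 4320)) := by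
        grw [abs_add_le, abs_mul (5 * w), abs_mul (8 - w ^ 2), h5, h8, hs, hc]
    _ ≤ |w| ^ 6 := by nlinarith [pow_nonneg (abs_nonneg w) 6]

lemma abs_integrandNum_le (w : ℝ) : |integrandNum w| ≤ 22 * w ^ 6 := by
  rcases le_or_gt |w| 1 with hw | hw
  · calc |integrandNum w| ≤ |w| ^ 6 := abs_integrandNum_le_of_abs_le_one hw
      _ ≤ 22 * w ^ 6 := by
          rw [pow_abs, abs_of_nonneg (by positivity)]; linarith [pow_two_nonneg (w ^ 3)]
  have hw2 : 1 ≤ w ^ 2 := by nlinarith [sq_abs w]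
  have hw6 : w ^ 2 ≤ w ^ 6 := by nlinarith [mul_le_mul hw2 hw2 zero_le_one (sq_nonneg w)]
  have h8 : |w ^ 2 - 8| ≤ w ^ 2 + 8 := abs_le.mpr ⟨by nlinarith, by nlinarith⟩
  calc |integrandNum w| ≤ |5 * w| * |sin w| + |w ^ 2 - 8| * |cos w| + |(8 : ℝ)| := by
        unfold integrandNum; grw [abs_sub, abs_sub, abs_mul (5 * w), abs_mul (w ^ 2 - 8)]
    _ ≤ 5 * |w| + (w ^ 2 + 8) + 8 := by
        grw [abs_sin_le_one, abs_cos_le_one, h8, abs_mul]; norm_num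
    _ ≤ 22 * w ^ 6 := by nlinarith [sq_abs w]

lemma abs_integrand_le (w : ℝ) : |π / 2 * integrandNum w / w ^ 6| ≤ 11 * π := by
  rcases eq_or_ne w 0 with rfl | hw
  · simp [pi_pos.le]
  have hw6 : 0 < w ^ 6 := by positivity
  rw [abs_div, abs_mul, abs_of_pos (by positivity : 0 < π / 2), abs_of_pos hw6, div_le_iff₀ hw6]
  nlinarith [abs_integrandNum_le w, pi_pos]

lemma intervalIntegrable_integrand (a b : ℝ) :
    IntervalIntegrable (fun w => π / 2 * integrandNum w / w ^ 6) volume a b :=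
  intervalIntegrable_const.mono_fun'
    (Measurable.aestronglyMeasurable (by unfold integrandNum; fun_prop))
    (ae_of_all _ fun w => (Real.norm_eq_abs _).trans_le (abs_integrand_le w))

lemma abs_primitiveNum_le_of_abs_le_one {w : ℝ} (hw : |w| ≤ 1) :
    |primitiveNum w| ≤ |w| ^ 6 := by
  set s := sin w - (w - w ^ 3 / 6 + w ^ 5 / 120)
  set c := cos w - (1 - w ^ 2 / 2 + w ^ 4 / 24)
  have hs : |s| ≤ |w| ^ 6 * (7 / 4320) := abs_sin_sub_taylor_six_le hw
  have hc : |c| ≤ |w| ^ 6 * (7 / 4320) := abs_cos_sub_taylor_six_le hw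
  obtain ⟨hw₁, hw₂⟩ := abs_le.mp hw
  have hw2 : w ^ 2 ≤ 1 := by nlinarith
  have hw6 : |w| ^ 6 = w ^ 6 := by rw [pow_abs, abs_of_nonneg (by positivity)]
  have hP : |7 / 600 * w ^ 6 - 1 / 800 * w ^ 8| ≤ 7 / 600 * |w| ^ 6 := by
    rw [hw6]
    exact abs_le.mpr ⟨by nlinarith [pow_nonneg (sq_nonneg w) 3], by nlinarith [sq_nonneg (w ^ 4)]⟩
  have hA : |w ^ 3 / 40 + 17 * w / 20| ≤ 1 := abs_le.mpr ⟨by nlinarith, by nlinarith⟩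
  have hB : |w ^ 4 / 40 - w ^ 2 / 20 + 8 / 5| ≤ 2 :=
    abs_le.mpr ⟨by nlinarith [sq_nonneg (w ^ 2)], by nlinarith⟩
  calc |primitiveNum w| = |(7 / 600 * w ^ 6 - 1 / 800 * w ^ 8) - (w ^ 3 / 40 + 17 * w / 20) * s
        - (w ^ 4 / 40 - w ^ 2 / 20 + 8 / 5) * c| := by
        unfold primitiveNum s c; ring_nf
    _ ≤ 7 / 600 * |w| ^ 6 + 1 * (|w| ^ 6 * (7 / 4320)) + 2 * (|w| ^ 6 * (7 / 4320)) := by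
        grw [abs_sub, abs_sub, abs_mul, abs_mul, hP, hA, hB, hs, hc]
    _ ≤ |w| ^ 6 := by nlinarith [pow_nonneg (abs_nonneg w) 6]

lemma hasDerivAt_primitiveNum_div_pow_five {w : ℝ} (hw : w ≠ 0) :
    HasDerivAt (fun w => primitiveNum w / w ^ 5) (integrandNum w / w ^ 6 + sinc w / 40) w := by
  have hA : HasDerivAt (fun w : ℝ => w ^ 3 / 40 + 17 * w / 20) (3 * w ^ 2 / 40 + 17 / 20) w :=
    (((hasDerivAt_pow 3 w).div_const 40).add (((hasDerivAt_id w).const_mul 17).div_const 20)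
      ).congr_deriv (by norm_num)
  have hB : HasDerivAt (fun w : ℝ => w ^ 4 / 40 - w ^ 2 / 20 + 8 / 5) (w ^ 3 / 10 - w / 10) w :=
    ((((hasDerivAt_pow 4 w).div_const 40).sub ((hasDerivAt_pow 2 w).div_const 20)).add_const
      (8 / 5 : ℝ)).congr_deriv (by push_cast; ring)
  have hN : HasDerivAt primitiveNum _ w :=
    ((hasDerivAt_const w (8 / 5 : ℝ)).sub (hA.mul (hasDerivAt_sin w))).sub
      (hB.mul (hasDerivAt_cos w))
  refine (hN.div (hasDerivAt_pow 5 w) (pow_ne_zero 5 hw)).congr_deriv ?_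
  rw [sinc_of_ne_zero hw]
  unfold integrandNum primitiveNum
  field_simp
  ring

lemma hasDerivAt_primitive {w : ℝ} (hw : w ≠ 0) :
    HasDerivAt primitive (π / 2 * integrandNum w / w ^ 6) w :=
  (((hasDerivAt_primitiveNum_div_pow_five hw).const_mul (π / 2)).sub
    ((continuous_sinc.integral_hasStrictDerivAt 0 w).hasDerivAt.const_mul (π / 80))).congr_deriv
    (by ring)

lemma continuous_primitiveNum_div_pow_five : Continuous fun w => primitiveNum w / w ^ 5 := by
  refine continuous_iff_continuousAt.mpr fun w => ?_
  rcases ne_or_eq w 0 with hw | rfl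
  · exact (hasDerivAt_primitiveNum_div_pow_five hw).continuousAt
  have hbound : ∀ᶠ x in nhds (0 : ℝ), ‖primitiveNum x / x ^ 5‖ ≤ |x| := by
    filter_upwards [Metric.closedBall_mem_nhds (0 : ℝ) one_pos] with x hx
    have hx : |x| ≤ 1 := by simpa using hx
    rcases eq_or_ne x 0 with rfl | hx0
    · simp
    rw [Real.norm_eq_abs, abs_div, abs_pow, div_le_iff₀ (by positivity)]
    linarith [abs_primitiveNum_le_of_abs_le_one hx]
  have h0 : primitiveNum 0 / 0 ^ 5 = 0 := by simp
  rw [ContinuousAt, h0]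
  exact squeeze_zero_norm' hbound (by simpa using (continuous_abs.tendsto (0 : ℝ)))

lemma continuous_primitive : Continuous primitive :=
  (continuous_const.mul continuous_primitiveNum_div_pow_five).sub
    (continuous_const.mul (intervalIntegral.continuous_primitive
      (fun _ _ => continuous_sinc.intervalIntegrable _ _) 0))

lemma primitiveNum_neg (w : ℝ) : primitiveNum (-w) = primitiveNum w := by
  unfold primitiveNum
  rw [sin_neg, cos_neg]
  ring

lemma primitiveNum_two_pi : primitiveNum (2 * π) = π ^ 2 / 5 - 2 * π ^ 4 / 5 := by
  unfold primitiveNum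
  rw [sin_two_pi, cos_two_pi]
  ring

lemma integral_sin_div_eq_integral_sinc (a b : ℝ) :
    ∫ t in a..b, sin t / t = ∫ t in a..b, sinc t := by
  refine intervalIntegral.integral_congr_ae ?_
  filter_upwards [Measure.ae_ne volume 0] with t ht _
  exact (sinc_of_ne_zero ht).symm

lemma integral_zero_neg_sinc (x : ℝ) :
    ∫ t in (0 : ℝ)..-x, sinc t = -∫ t in (0 : ℝ)..x, sinc t := by
  have := intervalIntegral.integral_comp_neg (a := 0) (b := x) sinc
  simp only [sinc_neg, neg_zero] at this
  rw [intervalIntegral.integral_symm, this]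

end SecondOrderCoefficient

end

/-- The second-order coefficient integral of Theorem 1.1:
`∫_{-2π}^{2π} (π/2)(5w sin w - (w² - 8)cos w - 8)/w⁶ dw = (1/160)(1/π² - 2 - 4π Si(2π))`.
(The integrand has a removable singularity at `w = 0`, a set of measure zero.) -/
theorem stmt8 :
    (∫ w in (-(2 * π))..(2 * π),
        (π / 2) * (5 * w * sin w - (w ^ 2 - 8) * cos w - 8) / w ^ 6)
      = (1 / 160) * (1 / π ^ 2 - 2 - 4 * π * ∫ t in (0:ℝ)..(2 * π), sin t / t) := by
  open SecondOrderCoefficient in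
  calc _ = primitive (2 * π) - primitive (-(2 * π)) :=
        integral_eq_of_hasDerivAt_off_countable_of_le _ _ (by linarith [pi_pos])
          (Set.countable_singleton 0) continuous_primitive.continuousOn
          (fun w hw => hasDerivAt_primitive hw.2) (intervalIntegrable_integrand _ _)
    _ = _ := by
        rw [integral_sin_div_eq_integral_sinc, primitive, primitive, primitiveNum_neg,
          integral_zero_neg_sinc, primitiveNum_two_pi]
        field_simp
        ring
end

section
/- For all real numbers a, b, c, ρ, θ and every w ≠ 0, setting x₀ = ρ(sin(w+θ) − sin θ)/w and y₀ = −ρ(cos(w+θ) − cos θ)/w, one has: a·x₀² + 2b·x₀y₀ + c·y₀² = (2ρ² sin²(w/2)/w²)·((a+c) + (a−c)cos(2θ+w) + 2b sin(2θ+w)). -/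
open Real

/-! Both chord differences factor through the midpoint angle `φ = θ + w/2`:
`(x₀, y₀) = r (cos φ, sin φ)` with `r = 2ρ sin(w/2)/w`. In polar form the quadratic
form splits, by the double-angle formulas, into its mean `(a + c) r²/2` and a part
oscillating in `2φ = 2θ + w`. -/

theorem sin_add_sub_sin (w θ : ℝ) :
    sin (w + θ) - sin θ = 2 * sin (w / 2) * cos (θ + w / 2) := by
  rw [sin_sub_sin]
  ring_nf

theorem cos_add_sub_cos (w θ : ℝ) :
    cos (w + θ) - cos θ = -(2 * sin (w / 2) * sin (θ + w / 2)) := by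
  rw [cos_sub_cos]
  ring_nf

theorem quadratic_form_polar (a b c r φ : ℝ) :
    a * (r * cos φ) ^ 2 + 2 * b * (r * cos φ) * (r * sin φ) + c * (r * sin φ) ^ 2
      = r ^ 2 / 2 * ((a + c) + (a - c) * cos (2 * φ) + 2 * b * sin (2 * φ)) := by
  rw [cos_two_mul, sin_two_mul]
  linear_combination (c * r ^ 2) * sin_sq_add_cos_sq φ

/-- The quadratic form `a x² + 2b xy + c y²` along the Heisenberg exponential map:
isolation of the rotation-invariant part `(a + c)` from the oscillating part
(equation (3.16) in the proof of Theorem 1.1). -/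
theorem stmt10 : ∀ a b c ρ θ : ℝ, ∀ w : ℝ, w ≠ 0 →
    (fun x₀ y₀ : ℝ => a * x₀ ^ 2 + 2 * b * x₀ * y₀ + c * y₀ ^ 2)
        (ρ * (sin (w + θ) - sin θ) / w) (-(ρ * (cos (w + θ) - cos θ)) / w)
      = (2 * ρ ^ 2 * sin (w / 2) ^ 2 / w ^ 2) *
          ((a + c) + (a - c) * cos (2 * θ + w) + 2 * b * sin (2 * θ + w)) := by
  intro a b c ρ θ w _
  beta_reduce
  set r := 2 * ρ * sin (w / 2) / w
  have hx : ρ * (sin (w + θ) - sin θ) / w = r * cos (θ + w / 2) := by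
    rw [sin_add_sub_sin]; ring
  have hy : -(ρ * (cos (w + θ) - cos θ)) / w = r * sin (θ + w / 2) := by
    rw [cos_add_sub_cos]; ring
  have hφ : 2 * θ + w = 2 * (θ + w / 2) := by ring
  rw [hx, hy, hφ, quadratic_form_polar]
  ring
end

section
/- Let C ∈ ℝ and let t : ℝ → ℝ be a function such that (t(w) − (2π/w − C/w³)) = O(1/w⁴) as w → +∞. Suppose δ > 0 and g : (0, δ) → ℝ satisfies t(g(ρ)) = ρ for all ρ ∈ (0, δ) and g(ρ) → +∞ as ρ → 0⁺. Then (g(ρ) − (2π/ρ − Cρ/(4π²))) = O(ρ²) as ρ → 0⁺. -/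
/-!
Write `a = 2π`. Multiplying `ρ = a/w - C/w³ + O(w⁻⁴)` by `w` gives `ρw - a = O(w⁻²)`, so
`ρw → a` and `w⁻¹ = O(ρ)`. The remaining error is then
`ρ (w - a/ρ + Cρ/a²) = w·O(w⁻⁴) + C (ρw - a)(ρw + a) / (a² w²) = O(w⁻³) = O(ρ³)`,
and dividing by `ρ` gives the claim.
-/

open Real Filter Asymptotics Topology

section

variable {α : Type*} {l : Filter α} {ρ w : α → ℝ}

lemma isBigO_inv_of_tendsto_mul {a : ℝ} (ha : a ≠ 0)
    (h : Tendsto (fun x => ρ x * w x) l (𝓝 a)) : (fun x => (w x)⁻¹) =O[l] ρ := by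
  have hbdd : (fun x => (ρ x * w x)⁻¹) =O[l] fun _ => (1 : ℝ) := (h.inv₀ ha).isBigO_one ℝ
  refine ((isBigO_refl ρ l).mul hbdd).congr' ?_ (by simp)
  filter_upwards [h.eventually_ne ha] with x hx
  rw [mul_inv, ← mul_assoc, mul_inv_cancel₀ (left_ne_zero_of_mul hx), one_mul]

theorem isBigO_sub_inverse_expansion {a C : ℝ} (ha : a ≠ 0) (hw : Tendsto w l atTop)
    (h : (fun x => ρ x - (a / w x - C / w x ^ 3)) =O[l] fun x => 1 / w x ^ 4) :
    (fun x => w x - (a / ρ x - C * ρ x / a ^ 2)) =O[l] fun x => ρ x ^ 2 := by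
  set u : α → ℝ := fun x => (w x)⁻¹
  have hu : Tendsto u l (𝓝 0) := tendsto_inv_atTop_zero.comp hw
  have hpow {m n : ℕ} (hmn : m < n) : (fun x => u x ^ n) =O[l] fun x => u x ^ m :=
    ((isLittleO_pow_pow hmn).comp_tendsto hu).isBigO
  have hw0 : ∀ᶠ x in l, w x ≠ 0 := hw.eventually_ne_atTop 0
  have hrem : (fun x => w x * (ρ x - (a / w x - C / w x ^ 3))) =O[l] fun x => u x ^ 3 := by
    refine ((isBigO_refl w l).mul h).congr' .rfl ?_
    filter_upwards [hw0] with x hx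
    simp only [u]; field_simp
  have hmul : (fun x => ρ x * w x - a) =O[l] fun x => u x ^ 2 := by
    refine ((hrem.trans (hpow (by norm_num))).sub
      ((isBigO_refl (fun x => u x ^ 2) l).const_mul_left C)).congr' ?_ .rfl
    filter_upwards [hw0] with x hx
    simp only [u]; field_simp; ring
  have hlim : Tendsto (fun x => ρ x * w x) l (𝓝 a) :=
    tendsto_sub_nhds_zero_iff.mp (hmul.trans_tendsto (by simpa using hu.pow 2))
  have hρ0 : ∀ᶠ x in l, ρ x ≠ 0 :=
    (hlim.eventually_ne ha).mono fun x hx => left_ne_zero_of_mul hx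
  have hscaled : (fun x => ρ x * (w x - (a / ρ x - C * ρ x / a ^ 2))) =O[l] fun x => ρ x ^ 3 := by
    have hquad : (fun x => C / a ^ 2 * (u x ^ 2 * ((ρ x * w x - a) * (ρ x * w x + a))))
        =O[l] fun x => u x ^ 3 := by
      have hprod := (isBigO_refl (fun x => u x ^ 2) l).mul
        (hmul.mul ((hlim.add_const a).isBigO_one ℝ))
      exact (hprod.trans ((hpow (by norm_num : 3 < 4)).congr_left fun x => by ring)).const_mul_left _
    refine ((hrem.add hquad).trans ((isBigO_inv_of_tendsto_mul ha hlim).pow 3)).congr' ?_ .rfl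
    filter_upwards [hw0, hρ0] with x hwx hρx
    simp only [u]; field_simp; ring
  refine ((isBigO_refl (fun x => (ρ x)⁻¹) l).mul hscaled).congr' ?_ ?_
  · filter_upwards [hρ0] with x hx
    field_simp
  · filter_upwards [hρ0] with x hx
    field_simp

end

/-- Asymptotic inversion of the cut-time expansion (equation (2.25) of the paper):
if `t(w) = 2π/w - C/w³ + O(w⁻⁴)` as `w → +∞` and `g` is a right inverse of `t`
near `0⁺` with `g(ρ) → +∞`, then `g(ρ) = 2π/ρ - Cρ/(4π²) + O(ρ²)` as `ρ → 0⁺`. -/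
theorem stmt14 (C : ℝ) (t g : ℝ → ℝ) (δ : ℝ) (hδ : 0 < δ)
    (ht : (fun w : ℝ => t w - (2 * π / w - C / w ^ 3)) =O[atTop] fun w : ℝ => 1 / w ^ 4)
    (hg : ∀ ρ ∈ Set.Ioo (0:ℝ) δ, t (g ρ) = ρ)
    (hg' : Tendsto g (nhdsWithin 0 (Set.Ioi 0)) atTop) :
    (fun ρ : ℝ => g ρ - (2 * π / ρ - C * ρ / (4 * π ^ 2)))
      =O[nhdsWithin 0 (Set.Ioi 0)] fun ρ : ℝ => ρ ^ 2 := by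
  have hinv : ∀ᶠ ρ in 𝓝[>] 0, t (g ρ) = ρ := mem_of_superset (Ioo_mem_nhdsGT hδ) hg
  have hexp : (fun ρ => ρ - (2 * π / g ρ - C / g ρ ^ 3)) =O[𝓝[>] 0] fun ρ => 1 / g ρ ^ 4 :=
    (ht.comp_tendsto hg').congr' (hinv.mono fun ρ hρ => by simp only [Function.comp, hρ]) .rfl
  have hpi : (2 * π) ^ 2 = 4 * π ^ 2 := by ring
  simpa only [hpi] using isBigO_sub_inverse_expansion (by positivity) hg' hexp
end
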